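/- arXiv:2307.04775 — 6 statements merged into one kernel-verified Lean document; each statement's English description precedes it below -/
import Mathlib

section
/- Let X, Y ⊆ ℝⁿ, and s₁,s₂,s₃,t₁,t₂,t₃ ∈ ℝ. If K₁ ∈ K_{s₁,s₂,s₃}(X×Y) and K₂ ∈ K_{t₁,t₂,t₃}(X×Y), then for all x',x'' ∈ X with x' ≠ x'' and all y ∈ Y outside the ball B_n(x',2|x'−x''|), one has |K₁(x',y)K₂(x',y) − K₁(x'',y)K₂(x'',y)| ≤ ‖K₁‖·‖K₂‖·( |x'−x''|^{s₃}/|x'−y|^{s₂+t₁} + 2^{|s₁|}|x'−x''|^{t₃}/|x'−y|^{t₂+s₁} ), where ‖·‖ denotes the respective K-norms. -/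
open Set Metric

noncomputable section

abbrev Euc (n : ℕ) := EuclideanSpace ℝ (Fin n)

/-- The set of values `‖x-y‖^s * ‖K x y‖` over distinct points of `X × Y`. -/
def kSet1 {n : ℕ} (X Y : Set (Euc n)) (s : ℝ) (K : Euc n → Euc n → ℂ) : Set ℝ :=
  {c | ∃ x ∈ X, ∃ y ∈ Y, x ≠ y ∧ c = ‖x - y‖ ^ s * ‖K x y‖}

/-- The set of values of the Hölder–type quotient of a kernel. -/
def kSet2 {n : ℕ} (X Y : Set (Euc n)) (s₂ s₃ : ℝ) (K : Euc n → Euc n → ℂ) : Set ℝ :=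
  {c | ∃ x' ∈ X, ∃ x'' ∈ X, x' ≠ x'' ∧ ∃ y ∈ Y, 2 * ‖x' - x''‖ ≤ ‖x' - y‖ ∧
       c = ‖x' - y‖ ^ s₂ / ‖x' - x''‖ ^ s₃ * ‖K x' y - K x'' y‖}

/-- Membership in the class `𝒦_{s₁,s₂,s₃}(X×Y)` of potential type kernels. -/
def memK {n : ℕ} (X Y : Set (Euc n)) (s₁ s₂ s₃ : ℝ) (K : Euc n → Euc n → ℂ) : Prop :=
  ContinuousOn (fun p : Euc n × Euc n => K p.1 p.2)
      ((X ×ˢ Y) \ {p : Euc n × Euc n | p.1 = p.2}) ∧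
  BddAbove (kSet1 X Y s₁ K) ∧ BddAbove (kSet2 X Y s₂ s₃ K)

/-- The norm of the class `𝒦_{s₁,s₂,s₃}(X×Y)`. -/
def kNorm {n : ℕ} (X Y : Set (Euc n)) (s₁ s₂ s₃ : ℝ) (K : Euc n → Euc n → ℂ) : ℝ :=
  sSup (kSet1 X Y s₁ K) + sSup (kSet2 X Y s₂ s₃ K)

lemma rpow_two_bound {d e s : ℝ} (hd : 0 < d) (he : 0 < e)
    (h1 : d ≤ 2 * e) (h2 : e ≤ 2 * d) :
    d ^ s ≤ 2 ^ |s| * e ^ s := by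
  rcases le_or_gt 0 s with hs | hs
  · rw [abs_of_nonneg hs]
    calc d ^ s ≤ (2 * e) ^ s := Real.rpow_le_rpow hd.le h1 hs
      _ = 2 ^ s * e ^ s := Real.mul_rpow (by norm_num) he.le
  · rw [abs_of_neg hs]
    have h3 : e / 2 ≤ d := by linarith
    calc d ^ s ≤ (e / 2) ^ s :=
          Real.rpow_le_rpow_of_nonpos (by linarith) h3 hs.le
      _ = 2 ^ (-s) * e ^ s := by
          rw [Real.div_rpow he.le (by norm_num), Real.rpow_neg (by norm_num)]
          field_simp

set_option maxHeartbeats 1000000 in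
/-- Product rule inequality for two kernels of potential type. -/
theorem stmt_3 {n : ℕ} (X Y : Set (Euc n)) (s₁ s₂ s₃ t₁ t₂ t₃ : ℝ)
    (K₁ K₂ : Euc n → Euc n → ℂ)
    (hK₁ : memK X Y s₁ s₂ s₃ K₁) (hK₂ : memK X Y t₁ t₂ t₃ K₂) :
    ∀ x' ∈ X, ∀ x'' ∈ X, x' ≠ x'' → ∀ y ∈ Y, 2 * ‖x' - x''‖ ≤ ‖x' - y‖ →
      ‖K₁ x' y * K₂ x' y - K₁ x'' y * K₂ x'' y‖ ≤
        kNorm X Y s₁ s₂ s₃ K₁ * kNorm X Y t₁ t₂ t₃ K₂ *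
          (‖x' - x''‖ ^ s₃ / ‖x' - y‖ ^ (s₂ + t₁) +
            2 ^ |s₁| * ‖x' - x''‖ ^ t₃ / ‖x' - y‖ ^ (t₂ + s₁)) := by
  intro x' hx' x'' hx'' hne y hy hball
  have hw : 0 < ‖x' - x''‖ := by
    simpa [sub_eq_zero] using hne
  have hd : 0 < ‖x' - y‖ := lt_of_lt_of_le (by linarith) hball
  have hx'y : x' ≠ y := by
    intro h; rw [h, sub_self, norm_zero] at hd; exact lt_irrefl 0 hd
  have he_ge : ‖x' - y‖ - ‖x' - x''‖ ≤ ‖x'' - y‖ := by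
    have h := norm_sub_norm_le (x' - y) (x' - x'')
    have : (x' - y) - (x' - x'') = x'' - y := by abel
    rwa [this] at h
  have he_le : ‖x'' - y‖ ≤ ‖x' - x''‖ + ‖x' - y‖ := by
    have h := norm_sub_le (x'' - x') (y - x')
    have h1 : (x'' - x') - (y - x') = x'' - y := by abel
    rw [h1, norm_sub_rev x'' x', norm_sub_rev y x'] at h
    exact h
  have he : 0 < ‖x'' - y‖ := by linarith
  have hx''y : x'' ≠ y := by
    intro h; rw [h, sub_self, norm_zero] at he; exact lt_irrefl 0 he
  -- abbreviations
  set A₁ := sSup (kSet1 X Y s₁ K₁) with hA₁def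
  set B₁ := sSup (kSet2 X Y s₂ s₃ K₁) with hB₁def
  set A₂ := sSup (kSet1 X Y t₁ K₂) with hA₂def
  set B₂ := sSup (kSet2 X Y t₂ t₃ K₂) with hB₂def
  have hA₁ : ‖x'' - y‖ ^ s₁ * ‖K₁ x'' y‖ ≤ A₁ :=
    le_csSup hK₁.2.1 ⟨x'', hx'', y, hy, hx''y, rfl⟩
  have hA₂ : ‖x' - y‖ ^ t₁ * ‖K₂ x' y‖ ≤ A₂ :=
    le_csSup hK₂.2.1 ⟨x', hx', y, hy, hx'y, rfl⟩
  have hB₁ : ‖x' - y‖ ^ s₂ / ‖x' - x''‖ ^ s₃ * ‖K₁ x' y - K₁ x'' y‖ ≤ B₁ :=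
    le_csSup hK₁.2.2 ⟨x', hx', x'', hx'', hne, y, hy, hball, rfl⟩
  have hB₂ : ‖x' - y‖ ^ t₂ / ‖x' - x''‖ ^ t₃ * ‖K₂ x' y - K₂ x'' y‖ ≤ B₂ :=
    le_csSup hK₂.2.2 ⟨x', hx', x'', hx'', hne, y, hy, hball, rfl⟩
  have hA₁0 : 0 ≤ A₁ := le_trans (by positivity) hA₁
  have hA₂0 : 0 ≤ A₂ := le_trans (by positivity) hA₂
  have hB₁0 : 0 ≤ B₁ := le_trans (by positivity) hB₁
  have hB₂0 : 0 ≤ B₂ := le_trans (by positivity) hB₂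
  -- explicit pointwise bounds
  have u1 : ‖K₁ x' y - K₁ x'' y‖ ≤ B₁ * ‖x' - x''‖ ^ s₃ / ‖x' - y‖ ^ s₂ := by
    rw [le_div_iff₀ (Real.rpow_pos_of_pos hd _)]
    have h1 : ‖K₁ x' y - K₁ x'' y‖ * ‖x' - y‖ ^ s₂ =
        (‖x' - y‖ ^ s₂ / ‖x' - x''‖ ^ s₃ * ‖K₁ x' y - K₁ x'' y‖) * ‖x' - x''‖ ^ s₃ := by
      have : (‖x' - x''‖ : ℝ) ^ s₃ ≠ 0 := (Real.rpow_pos_of_pos hw _).ne'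
      field_simp
    rw [h1]
    exact mul_le_mul_of_nonneg_right hB₁ (Real.rpow_pos_of_pos hw _).le
  have u2 : ‖K₂ x' y‖ ≤ A₂ / ‖x' - y‖ ^ t₁ := by
    rw [le_div_iff₀ (Real.rpow_pos_of_pos hd _)]
    calc ‖K₂ x' y‖ * ‖x' - y‖ ^ t₁ = ‖x' - y‖ ^ t₁ * ‖K₂ x' y‖ := by ring
      _ ≤ A₂ := hA₂
  have u4 : ‖K₂ x' y - K₂ x'' y‖ ≤ B₂ * ‖x' - x''‖ ^ t₃ / ‖x' - y‖ ^ t₂ := by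
    rw [le_div_iff₀ (Real.rpow_pos_of_pos hd _)]
    have h1 : ‖K₂ x' y - K₂ x'' y‖ * ‖x' - y‖ ^ t₂ =
        (‖x' - y‖ ^ t₂ / ‖x' - x''‖ ^ t₃ * ‖K₂ x' y - K₂ x'' y‖) * ‖x' - x''‖ ^ t₃ := by
      have : (‖x' - x''‖ : ℝ) ^ t₃ ≠ 0 := (Real.rpow_pos_of_pos hw _).ne'
      field_simp
    rw [h1]
    exact mul_le_mul_of_nonneg_right hB₂ (Real.rpow_pos_of_pos hw _).le
  have htwo : ‖x' - y‖ ^ s₁ ≤ 2 ^ |s₁| * ‖x'' - y‖ ^ s₁ :=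
    rpow_two_bound hd he (by linarith) (by linarith)
  have u3 : ‖K₁ x'' y‖ ≤ A₁ * 2 ^ |s₁| / ‖x' - y‖ ^ s₁ := by
    rw [le_div_iff₀ (Real.rpow_pos_of_pos hd _)]
    calc ‖K₁ x'' y‖ * ‖x' - y‖ ^ s₁
        ≤ ‖K₁ x'' y‖ * (2 ^ |s₁| * ‖x'' - y‖ ^ s₁) :=
          mul_le_mul_of_nonneg_left htwo (norm_nonneg _)
      _ = (‖x'' - y‖ ^ s₁ * ‖K₁ x'' y‖) * 2 ^ |s₁| := by ring
      _ ≤ A₁ * 2 ^ |s₁| := mul_le_mul_of_nonneg_right hA₁ (by positivity)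
  -- split the product difference
  have hsplit : ‖K₁ x' y * K₂ x' y - K₁ x'' y * K₂ x'' y‖ ≤
      ‖K₁ x' y - K₁ x'' y‖ * ‖K₂ x' y‖ + ‖K₁ x'' y‖ * ‖K₂ x' y - K₂ x'' y‖ := by
    have h1 : K₁ x' y * K₂ x' y - K₁ x'' y * K₂ x'' y =
        (K₁ x' y - K₁ x'' y) * K₂ x' y + K₁ x'' y * (K₂ x' y - K₂ x'' y) := by ring
    rw [h1]
    refine (norm_add_le _ _).trans ?_
    simp [norm_mul]
  have T1 : ‖K₁ x' y - K₁ x'' y‖ * ‖K₂ x' y‖ ≤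
      (A₁ + B₁) * (A₂ + B₂) * (‖x' - x''‖ ^ s₃ / ‖x' - y‖ ^ (s₂ + t₁)) := by
    calc ‖K₁ x' y - K₁ x'' y‖ * ‖K₂ x' y‖
        ≤ (B₁ * ‖x' - x''‖ ^ s₃ / ‖x' - y‖ ^ s₂) * (A₂ / ‖x' - y‖ ^ t₁) :=
          mul_le_mul u1 u2 (norm_nonneg _) (by positivity)
      _ = B₁ * A₂ * (‖x' - x''‖ ^ s₃ / ‖x' - y‖ ^ (s₂ + t₁)) := by
          rw [Real.rpow_add hd]; ring
      _ ≤ (A₁ + B₁) * (A₂ + B₂) * (‖x' - x''‖ ^ s₃ / ‖x' - y‖ ^ (s₂ + t₁)) := by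
          have hterm : (0:ℝ) ≤ ‖x' - x''‖ ^ s₃ / ‖x' - y‖ ^ (s₂ + t₁) := by positivity
          have : B₁ * A₂ ≤ (A₁ + B₁) * (A₂ + B₂) :=
            mul_le_mul (by linarith) (by linarith) hA₂0 (by linarith)
          exact mul_le_mul_of_nonneg_right this hterm
  have T2 : ‖K₁ x'' y‖ * ‖K₂ x' y - K₂ x'' y‖ ≤
      (A₁ + B₁) * (A₂ + B₂) * (2 ^ |s₁| * ‖x' - x''‖ ^ t₃ / ‖x' - y‖ ^ (t₂ + s₁)) := by
    calc ‖K₁ x'' y‖ * ‖K₂ x' y - K₂ x'' y‖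
        ≤ (A₁ * 2 ^ |s₁| / ‖x' - y‖ ^ s₁) * (B₂ * ‖x' - x''‖ ^ t₃ / ‖x' - y‖ ^ t₂) :=
          mul_le_mul u3 u4 (norm_nonneg _) (by positivity)
      _ = A₁ * B₂ * (2 ^ |s₁| * ‖x' - x''‖ ^ t₃ / ‖x' - y‖ ^ (t₂ + s₁)) := by
          rw [Real.rpow_add hd]; ring
      _ ≤ (A₁ + B₁) * (A₂ + B₂) * (2 ^ |s₁| * ‖x' - x''‖ ^ t₃ / ‖x' - y‖ ^ (t₂ + s₁)) := by
          have hterm : (0:ℝ) ≤ 2 ^ |s₁| * ‖x' - x''‖ ^ t₃ / ‖x' - y‖ ^ (t₂ + s₁) := by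
            positivity
          have : A₁ * B₂ ≤ (A₁ + B₁) * (A₂ + B₂) :=
            mul_le_mul (by linarith) (by linarith) hB₂0 (by linarith)
          exact mul_le_mul_of_nonneg_right this hterm
  have hgoal : kNorm X Y s₁ s₂ s₃ K₁ = A₁ + B₁ := rfl
  have hgoal2 : kNorm X Y t₁ t₂ t₃ K₂ = A₂ + B₂ := rfl
  rw [hgoal, hgoal2, mul_add]
  linarith
end
end

section
/- Let X, Y ⊆ ℝⁿ and s₁,t₁,s₃ ∈ ℝ. The pointwise product of kernels is a bilinear and continuous map from K_{s₁,s₁+s₃,s₃}(X×Y) × K_{t₁,t₁+s₃,s₃}(X×Y) to K_{s₁+t₁,s₁+s₃+t₁,s₃}(X×Y). -/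
/-! The size bounds multiply, since `|x - y| ^ (s₁ + t₁) = |x - y| ^ s₁ |x - y| ^ t₁`. For the
smoothness bound use the Leibniz rule
`(K₁K₂)(x',y) - (K₁K₂)(x'',y) = (K₁(x',y) - K₁(x'',y)) K₂(x',y) + K₁(x'',y) (K₂(x',y) - K₂(x'',y))`:
the first term is controlled by the smoothness of `K₁` and the size of `K₂` at `x'`, the second by
the size of `K₁` at `x''` and the smoothness of `K₂`. Since `2|x' - x''| ≤ |x' - y|`, the distances
`|x' - y|` and `|x'' - y|` agree up to a factor `2`, so moving the size bound of `K₁` from `x''` to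
`x'` costs only the constant `2 ^ |s₁|`. -/

open Set Metric

noncomputable section

lemma Real.rpow_le_rpow_abs_mul_rpow {r r' c : ℝ} (hr : 0 < r) (hr' : 0 < r') (hc : 1 ≤ c)
    (h₁ : r ≤ c * r') (h₂ : r' ≤ c * r) (s : ℝ) : r ^ s ≤ c ^ |s| * r' ^ s := by
  rcases le_or_gt 0 s with hs | hs
  · rw [abs_of_nonneg hs, ← Real.mul_rpow (by linarith) hr'.le]
    exact Real.rpow_le_rpow hr.le h₁ hs
  · have h₂' : r' / c ≤ r := (div_le_iff₀' (by linarith)).2 h₂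
    calc r ^ s ≤ (r' / c) ^ s := Real.rpow_le_rpow_of_nonpos (by positivity) h₂' hs.le
      _ = c ^ |s| * r' ^ s := by
        rw [abs_of_neg hs, Real.div_rpow hr'.le (by linarith), Real.rpow_neg (by linarith)]
        ring

lemma norm_sub_le_two_mul_of_two_mul_norm_sub_le {E : Type*} [SeminormedAddCommGroup E]
    {x' x'' y : E} (h : 2 * ‖x' - x''‖ ≤ ‖x' - y‖) :
    ‖x' - y‖ ≤ 2 * ‖x'' - y‖ ∧ ‖x'' - y‖ ≤ 2 * ‖x' - y‖ := by
  have h₁ := norm_sub_le_norm_sub_add_norm_sub x' x'' y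
  have h₂ := norm_sub_le_norm_sub_add_norm_sub x'' x' y
  rw [norm_sub_rev x'' x'] at h₂
  constructor <;> linarith [norm_nonneg (x' - x'')]

lemma norm_mul_sub_mul_le {R : Type*} [SeminormedRing R] (a b c d : R) :
    ‖a * b - c * d‖ ≤ ‖a - c‖ * ‖b‖ + ‖c‖ * ‖b - d‖ :=
  calc ‖a * b - c * d‖ = ‖(a - c) * b + c * (b - d)‖ := by noncomm_ring
    _ ≤ ‖a - c‖ * ‖b‖ + ‖c‖ * ‖b - d‖ :=
      (norm_add_le _ _).trans (add_le_add (norm_mul_le _ _) (norm_mul_le _ _))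

section Kernels

variable {n : ℕ} {X Y : Set (Euc n)}

lemma sSup_kSet1_nonneg (s : ℝ) (K : Euc n → Euc n → ℂ) : 0 ≤ sSup (kSet1 X Y s K) :=
  Real.sSup_nonneg <| by rintro c ⟨x, -, y, -, -, rfl⟩; positivity

lemma sSup_kSet2_nonneg (s₂ s₃ : ℝ) (K : Euc n → Euc n → ℂ) :
    0 ≤ sSup (kSet2 X Y s₂ s₃ K) :=
  Real.sSup_nonneg <| by rintro c ⟨x', -, x'', -, -, y, -, -, rfl⟩; positivity

lemma le_sSup_kSet1 {s : ℝ} {K : Euc n → Euc n → ℂ} (hK : BddAbove (kSet1 X Y s K))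
    {x y : Euc n} (hx : x ∈ X) (hy : y ∈ Y) (hxy : x ≠ y) :
    ‖x - y‖ ^ s * ‖K x y‖ ≤ sSup (kSet1 X Y s K) :=
  le_csSup hK ⟨x, hx, y, hy, hxy, rfl⟩

lemma le_sSup_kSet2 {s₂ s₃ : ℝ} {K : Euc n → Euc n → ℂ} (hK : BddAbove (kSet2 X Y s₂ s₃ K))
    {x' x'' y : Euc n} (hx' : x' ∈ X) (hx'' : x'' ∈ X) (hne : x' ≠ x'') (hy : y ∈ Y)
    (hsep : 2 * ‖x' - x''‖ ≤ ‖x' - y‖) :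
    ‖x' - y‖ ^ s₂ / ‖x' - x''‖ ^ s₃ * ‖K x' y - K x'' y‖ ≤ sSup (kSet2 X Y s₂ s₃ K) :=
  le_csSup hK ⟨x', hx', x'', hx'', hne, y, hy, hsep, rfl⟩

lemma kSet1_mul_le {s t : ℝ} {K₁ K₂ : Euc n → Euc n → ℂ}
    (h₁ : BddAbove (kSet1 X Y s K₁)) (h₂ : BddAbove (kSet1 X Y t K₂)) :
    ∀ c ∈ kSet1 X Y (s + t) (fun x y => K₁ x y * K₂ x y),
      c ≤ sSup (kSet1 X Y s K₁) * sSup (kSet1 X Y t K₂) := by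
  rintro c ⟨x, hx, y, hy, hxy, rfl⟩
  have hr : 0 < ‖x - y‖ := norm_pos_iff.2 (sub_ne_zero.2 hxy)
  calc ‖x - y‖ ^ (s + t) * ‖K₁ x y * K₂ x y‖
      = (‖x - y‖ ^ s * ‖K₁ x y‖) * (‖x - y‖ ^ t * ‖K₂ x y‖) := by
        rw [Real.rpow_add hr, norm_mul]; ring
    _ ≤ _ := mul_le_mul (le_sSup_kSet1 h₁ hx hy hxy) (le_sSup_kSet1 h₂ hx hy hxy)
        (by positivity) (sSup_kSet1_nonneg _ _)

lemma kSet2_mul_le {s t s₃ : ℝ} {K₁ K₂ : Euc n → Euc n → ℂ}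
    (ha₁ : BddAbove (kSet1 X Y s K₁)) (hb₁ : BddAbove (kSet2 X Y (s + s₃) s₃ K₁))
    (ha₂ : BddAbove (kSet1 X Y t K₂)) (hb₂ : BddAbove (kSet2 X Y (t + s₃) s₃ K₂)) :
    ∀ c ∈ kSet2 X Y (s + s₃ + t) s₃ (fun x y => K₁ x y * K₂ x y),
      c ≤ sSup (kSet2 X Y (s + s₃) s₃ K₁) * sSup (kSet1 X Y t K₂) +
        2 ^ |s| * sSup (kSet1 X Y s K₁) * sSup (kSet2 X Y (t + s₃) s₃ K₂) := by
  rintro c ⟨x', hx', x'', hx'', hne, y, hy, hsep, rfl⟩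
  have hd : 0 < ‖x' - x''‖ := norm_pos_iff.2 (sub_ne_zero.2 hne)
  obtain ⟨hcmp₁, hcmp₂⟩ := norm_sub_le_two_mul_of_two_mul_norm_sub_le hsep
  have hr' : 0 < ‖x' - y‖ := by linarith
  have hr'' : 0 < ‖x'' - y‖ := by linarith
  have hxy' : x' ≠ y := sub_ne_zero.1 (norm_pos_iff.1 hr')
  have hxy'' : x'' ≠ y := sub_ne_zero.1 (norm_pos_iff.1 hr'')
  have hsize₁ : ‖x' - y‖ ^ s * ‖K₁ x'' y‖ ≤ 2 ^ |s| * sSup (kSet1 X Y s K₁) :=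
    calc ‖x' - y‖ ^ s * ‖K₁ x'' y‖ ≤ (2 ^ |s| * ‖x'' - y‖ ^ s) * ‖K₁ x'' y‖ := by
          gcongr
          exact Real.rpow_le_rpow_abs_mul_rpow hr' hr'' one_le_two hcmp₁ hcmp₂ s
      _ ≤ 2 ^ |s| * sSup (kSet1 X Y s K₁) := by
          rw [mul_assoc]; gcongr; exact le_sSup_kSet1 ha₁ hx'' hy hxy''
  set Q := ‖x' - y‖ ^ (s + s₃ + t) / ‖x' - x''‖ ^ s₃
  have hsplit : Q * (‖K₁ x' y - K₁ x'' y‖ * ‖K₂ x' y‖ + ‖K₁ x'' y‖ * ‖K₂ x' y - K₂ x'' y‖) =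
      (‖x' - y‖ ^ (s + s₃) / ‖x' - x''‖ ^ s₃ * ‖K₁ x' y - K₁ x'' y‖) *
          (‖x' - y‖ ^ t * ‖K₂ x' y‖) +
        (‖x' - y‖ ^ s * ‖K₁ x'' y‖) *
          (‖x' - y‖ ^ (t + s₃) / ‖x' - x''‖ ^ s₃ * ‖K₂ x' y - K₂ x'' y‖) := by
    have e₁ : ‖x' - y‖ ^ (s + s₃ + t) = ‖x' - y‖ ^ (s + s₃) * ‖x' - y‖ ^ t :=
      Real.rpow_add hr' _ _
    have e₂ : ‖x' - y‖ ^ (s + s₃ + t) = ‖x' - y‖ ^ s * ‖x' - y‖ ^ (t + s₃) := by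
      rw [← Real.rpow_add hr']; ring_nf
    rw [mul_add]
    congr 1
    · simp only [Q, e₁]; ring
    · simp only [Q, e₂]; ring
  calc Q * ‖K₁ x' y * K₂ x' y - K₁ x'' y * K₂ x'' y‖
      ≤ Q * (‖K₁ x' y - K₁ x'' y‖ * ‖K₂ x' y‖ + ‖K₁ x'' y‖ * ‖K₂ x' y - K₂ x'' y‖) := by
        gcongr; exact norm_mul_sub_mul_le _ _ _ _
    _ ≤ _ := by
        rw [hsplit]
        exact add_le_add
          (mul_le_mul (le_sSup_kSet2 hb₁ hx' hx'' hne hy hsep) (le_sSup_kSet1 ha₂ hx' hy hxy')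
            (by positivity) (sSup_kSet2_nonneg _ _ _))
          (mul_le_mul hsize₁ (le_sSup_kSet2 hb₂ hx' hx'' hne hy hsep) (by positivity)
            (by have := sSup_kSet1_nonneg (X := X) (Y := Y) s K₁; positivity))

end Kernels

/-- The pointwise product is bilinear and continuous from
`𝒦_{s₁,s₁+s₃,s₃}(X×Y) × 𝒦_{t₁,t₁+s₃,s₃}(X×Y)` to `𝒦_{s₁+t₁,s₁+s₃+t₁,s₃}(X×Y)`. -/
theorem stmt_4 {n : ℕ} (X Y : Set (Euc n)) (s₁ t₁ s₃ : ℝ) :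
    ∃ C > (0 : ℝ), ∀ K₁ K₂ : Euc n → Euc n → ℂ,
      memK X Y s₁ (s₁ + s₃) s₃ K₁ → memK X Y t₁ (t₁ + s₃) s₃ K₂ →
      memK X Y (s₁ + t₁) (s₁ + s₃ + t₁) s₃ (fun x y => K₁ x y * K₂ x y) ∧
      kNorm X Y (s₁ + t₁) (s₁ + s₃ + t₁) s₃ (fun x y => K₁ x y * K₂ x y) ≤
        C * kNorm X Y s₁ (s₁ + s₃) s₃ K₁ * kNorm X Y t₁ (t₁ + s₃) s₃ K₂ := by
  refine ⟨2 ^ |s₁|, by positivity, fun K₁ K₂ ⟨hc₁, ha₁, hb₁⟩ ⟨hc₂, ha₂, hb₂⟩ => ?_⟩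
  have hP₁ := kSet1_mul_le ha₁ ha₂
  have hP₂ := kSet2_mul_le ha₁ hb₁ ha₂ hb₂
  refine ⟨⟨hc₁.mul hc₂, ⟨_, hP₁⟩, ⟨_, hP₂⟩⟩, ?_⟩
  have na₁ := sSup_kSet1_nonneg (X := X) (Y := Y) s₁ K₁
  have nb₁ := sSup_kSet2_nonneg (X := X) (Y := Y) (s₁ + s₃) s₃ K₁
  have na₂ := sSup_kSet1_nonneg (X := X) (Y := Y) t₁ K₂
  have nb₂ := sSup_kSet2_nonneg (X := X) (Y := Y) (t₁ + s₃) s₃ K₂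
  set a₁ := sSup (kSet1 X Y s₁ K₁)
  set b₁ := sSup (kSet2 X Y (s₁ + s₃) s₃ K₁)
  set a₂ := sSup (kSet1 X Y t₁ K₂)
  set b₂ := sSup (kSet2 X Y (t₁ + s₃) s₃ K₂)
  have hA : (1 : ℝ) ≤ 2 ^ |s₁| := Real.one_le_rpow one_le_two (abs_nonneg _)
  calc _ ≤ a₁ * a₂ + (b₁ * a₂ + 2 ^ |s₁| * a₁ * b₂) :=
        add_le_add (Real.sSup_le hP₁ (by positivity)) (Real.sSup_le hP₂ (by positivity))
    _ ≤ 2 ^ |s₁| * (a₁ + b₁) * (a₂ + b₂) := by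
        nlinarith [mul_nonneg (sub_nonneg.2 hA) (mul_nonneg na₁ na₂),
          mul_nonneg (sub_nonneg.2 hA) (mul_nonneg nb₁ na₂), mul_nonneg nb₁ nb₂]
end
end

section
/- Let X, Y be bounded subsets of ℝⁿ, s₁,s₂,s₃ ∈ ℝ with s₂ ≥ s₁, and let s₃ ∈ (0,1]. The map that takes a pair (K,f) ∈ K_{s₁,s₂,s₃}(X×Y) × C^{0,s₃}_b(X) to the kernel (x,y) ↦ K(x,y)f(x) is bilinear and continuous with values in K_{s₁,s₂,s₃}(X×Y). -/
open Set Metric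

noncomputable section

/-- The set of values `‖f x‖` over `X`. -/
def hSet1 {n : ℕ} (X : Set (Euc n)) (f : Euc n → ℂ) : Set ℝ := (fun x => ‖f x‖) '' X

/-- The set of values of the `α`-Hölder quotient of `f` on `X`. -/
def hSet2 {n : ℕ} (X : Set (Euc n)) (α : ℝ) (f : Euc n → ℂ) : Set ℝ :=
  {c | ∃ x ∈ X, ∃ y ∈ X, x ≠ y ∧ c = ‖f x - f y‖ / ‖x - y‖ ^ α}

/-- Membership in `C^{0,α}_b(X)`: bounded and `α`-Hölder continuous. -/
def memH {n : ℕ} (X : Set (Euc n)) (α : ℝ) (f : Euc n → ℂ) : Prop :=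
  BddAbove (hSet1 X f) ∧ BddAbove (hSet2 X α f)

/-- The norm of `C^{0,α}_b(X)`. -/
def hNorm {n : ℕ} (X : Set (Euc n)) (α : ℝ) (f : Euc n → ℂ) : ℝ :=
  sSup (hSet1 X f) + sSup (hSet2 X α f)

/-- If `X`, `Y` are bounded and `s₂ ≥ s₁`, `s₃ ∈ (0,1]`, then the map
`(K,f) ↦ K(x,y)f(x)` is bilinear and continuous from
`𝒦_{s₁,s₂,s₃}(X×Y) × C^{0,s₃}_b(X)` to `𝒦_{s₁,s₂,s₃}(X×Y)`. -/
theorem stmt_6 {n : ℕ} (X Y : Set (Euc n))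
    (hX : Bornology.IsBounded X) (hY : Bornology.IsBounded Y)
    (s₁ s₂ s₃ : ℝ) (hs : s₁ ≤ s₂) (hs₃ : s₃ ∈ Ioc (0:ℝ) 1) :
    ∃ C > (0 : ℝ), ∀ (K : Euc n → Euc n → ℂ) (f : Euc n → ℂ),
      memK X Y s₁ s₂ s₃ K → (ContinuousOn f X ∧ memH X s₃ f) →
      memK X Y s₁ s₂ s₃ (fun x y => K x y * f x) ∧
      kNorm X Y s₁ s₂ s₃ (fun x y => K x y * f x) ≤
        C * kNorm X Y s₁ s₂ s₃ K * hNorm X s₃ f := by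

  -- a bound for distances between points of `X` and `Y`
  obtain ⟨R, hR⟩ := Metric.isBounded_iff.1 (hX.union hY)
  have hD1 : (1:ℝ) ≤ max R 1 := le_max_right _ _
  have hD0 : (0:ℝ) < max R 1 := lt_of_lt_of_le one_pos hD1
  have hdist : ∀ x ∈ X, ∀ y ∈ Y, ‖x - y‖ ≤ max R 1 := by
    intro x hx y hy
    have h := hR (Or.inl hx) (Or.inr hy)
    rw [dist_eq_norm] at h
    exact h.trans (le_max_left _ _)
  have hM0 : (0:ℝ) < (2:ℝ) ^ |s₁| * (max R 1) ^ (s₂ - s₁) :=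
    mul_pos (Real.rpow_pos_of_pos two_pos _) (Real.rpow_pos_of_pos hD0 _)
  refine ⟨1 + (2:ℝ) ^ |s₁| * (max R 1) ^ (s₂ - s₁), by linarith, ?_⟩
  intro K f hK hf
  obtain ⟨hKc, hK1, hK2⟩ := hK
  obtain ⟨hfc, hf1, hf2⟩ := hf
  set M : ℝ := (2:ℝ) ^ |s₁| * (max R 1) ^ (s₂ - s₁) with hMdef
  set A₁ : ℝ := sSup (kSet1 X Y s₁ K) with hA₁def
  set A₂ : ℝ := sSup (kSet2 X Y s₂ s₃ K) with hA₂def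
  set B₁ : ℝ := sSup (hSet1 X f) with hB₁def
  set B₂ : ℝ := sSup (hSet2 X s₃ f) with hB₂def
  have hA₁0 : 0 ≤ A₁ := Real.sSup_nonneg (by
    rintro c ⟨x, hx, y, hy, hxy, rfl⟩; positivity)
  have hA₂0 : 0 ≤ A₂ := Real.sSup_nonneg (by
    rintro c ⟨x', hx', x'', hx'', hne, y, hy, hsep, rfl⟩; positivity)
  have hB₁0 : 0 ≤ B₁ := Real.sSup_nonneg (by
    rintro c ⟨x, hx, rfl⟩; positivity)
  have hB₂0 : 0 ≤ B₂ := Real.sSup_nonneg (by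
    rintro c ⟨x, hx, y, hy, hxy, rfl⟩; positivity)
  -- pointwise bound for the first seminorm of the product
  have P1 : ∀ c ∈ kSet1 X Y s₁ (fun x y => K x y * f x), c ≤ A₁ * B₁ := by
    rintro c ⟨x, hx, y, hy, hxy, rfl⟩
    have h1 : ‖x - y‖ ^ s₁ * ‖K x y‖ ≤ A₁ := le_csSup hK1 ⟨x, hx, y, hy, hxy, rfl⟩
    have h2 : ‖f x‖ ≤ B₁ := le_csSup hf1 ⟨x, hx, rfl⟩
    calc ‖x - y‖ ^ s₁ * ‖K x y * f x‖
        = (‖x - y‖ ^ s₁ * ‖K x y‖) * ‖f x‖ := by rw [norm_mul]; ring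
      _ ≤ A₁ * B₁ := mul_le_mul h1 h2 (norm_nonneg _) hA₁0
  -- pointwise bound for the second seminorm of the product
  have P2 : ∀ c ∈ kSet2 X Y s₂ s₃ (fun x y => K x y * f x),
      c ≤ A₂ * B₁ + M * (A₁ * B₂) := by
    rintro c ⟨x', hx', x'', hx'', hne, y, hy, hsep, rfl⟩
    have hd0 : 0 < ‖x' - x''‖ := norm_pos_iff.2 (sub_ne_zero.2 hne)
    have hr0 : 0 < ‖x' - y‖ := lt_of_lt_of_le (by linarith) hsep
    have htr1 : ‖x' - y‖ ≤ ‖x' - x''‖ + ‖x'' - y‖ := by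
      have h := dist_triangle x' x'' y
      rw [dist_eq_norm, dist_eq_norm, dist_eq_norm] at h
      exact h
    have htr2 : ‖x'' - y‖ ≤ ‖x'' - x'‖ + ‖x' - y‖ := by
      have h := dist_triangle x'' x' y
      rw [dist_eq_norm, dist_eq_norm, dist_eq_norm] at h
      exact h
    have hrev : ‖x'' - x'‖ = ‖x' - x''‖ := norm_sub_rev _ _
    have htlow : ‖x' - y‖ / 2 ≤ ‖x'' - y‖ := by linarith
    have hthigh : ‖x'' - y‖ ≤ 2 * ‖x' - y‖ := by linarith
    have ht0 : 0 < ‖x'' - y‖ := lt_of_lt_of_le (by linarith) htlow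
    have hty : x'' ≠ y := by
      intro h
      rw [h, sub_self, norm_zero] at ht0
      exact lt_irrefl 0 ht0
    have hKA : ‖x'' - y‖ ^ s₁ * ‖K x'' y‖ ≤ A₁ :=
      le_csSup hK1 ⟨x'', hx'', y, hy, hty, rfl⟩
    have hKd : ‖x' - y‖ ^ s₂ / ‖x' - x''‖ ^ s₃ * ‖K x' y - K x'' y‖ ≤ A₂ :=
      le_csSup hK2 ⟨x', hx', x'', hx'', hne, y, hy, hsep, rfl⟩
    have hfB : ‖f x'‖ ≤ B₁ := le_csSup hf1 ⟨x', hx', rfl⟩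
    have hfH : ‖f x' - f x''‖ / ‖x' - x''‖ ^ s₃ ≤ B₂ :=
      le_csSup hf2 ⟨x', hx', x'', hx'', hne, rfl⟩
    have hds : (0:ℝ) < ‖x' - x''‖ ^ s₃ := Real.rpow_pos_of_pos hd0 _
    have hts : (0:ℝ) < ‖x'' - y‖ ^ s₁ := Real.rpow_pos_of_pos ht0 _
    have hrs2 : (0:ℝ) < ‖x' - y‖ ^ s₂ := Real.rpow_pos_of_pos hr0 _
    -- quotient bound
    have hu1 : (1:ℝ)/2 ≤ ‖x' - y‖ / ‖x'' - y‖ := by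
      rw [div_le_div_iff₀ two_pos ht0]; linarith
    have hu2 : ‖x' - y‖ / ‖x'' - y‖ ≤ 2 := by
      rw [div_le_iff₀ ht0]; linarith
    have hpow : (‖x' - y‖ / ‖x'' - y‖) ^ s₁ ≤ (2:ℝ) ^ |s₁| := by
      rcases le_or_gt 0 s₁ with h | h
      · calc (‖x' - y‖ / ‖x'' - y‖) ^ s₁ ≤ (2:ℝ) ^ s₁ :=
              Real.rpow_le_rpow (by positivity) hu2 h
          _ = (2:ℝ) ^ |s₁| := by rw [abs_of_nonneg h]
      · calc (‖x' - y‖ / ‖x'' - y‖) ^ s₁ ≤ ((1:ℝ)/2) ^ s₁ :=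
              Real.rpow_le_rpow_of_nonpos (by norm_num) hu1 h.le
          _ = (2:ℝ) ^ |s₁| := by
              rw [abs_of_neg h, one_div,
                Real.inv_rpow (by norm_num : (0:ℝ) ≤ 2),
                ← Real.rpow_neg (by norm_num : (0:ℝ) ≤ 2)]
    have hre : ‖x' - y‖ ^ (s₂ - s₁) ≤ (max R 1) ^ (s₂ - s₁) :=
      Real.rpow_le_rpow hr0.le (hdist x' hx' y hy) (by linarith)
    have hdiv : ‖x' - y‖ ^ s₂ / ‖x'' - y‖ ^ s₁ ≤ M := by
      have e1 : ‖x' - y‖ ^ s₂ / ‖x'' - y‖ ^ s₁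
          = ‖x' - y‖ ^ (s₂ - s₁) * (‖x' - y‖ / ‖x'' - y‖) ^ s₁ := by
        rw [Real.rpow_sub hr0, Real.div_rpow hr0.le ht0.le]
        field_simp
      rw [e1, hMdef, mul_comm ((2:ℝ) ^ |s₁|)]
      exact mul_le_mul hre hpow (by positivity) (Real.rpow_pos_of_pos hD0 _).le
    -- splitting the difference
    have hsplit : ‖K x' y * f x' - K x'' y * f x''‖ ≤
        ‖K x' y - K x'' y‖ * ‖f x'‖ + ‖K x'' y‖ * ‖f x' - f x''‖ := by
      have e : K x' y * f x' - K x'' y * f x''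
          = (K x' y - K x'' y) * f x' + K x'' y * (f x' - f x'') := by ring
      rw [e]
      exact (norm_add_le _ _).trans (by rw [norm_mul, norm_mul])
    have hT1 : ‖x' - y‖ ^ s₂ / ‖x' - x''‖ ^ s₃ * ‖K x' y - K x'' y‖ * ‖f x'‖
        ≤ A₂ * B₁ := mul_le_mul hKd hfB (norm_nonneg _) hA₂0
    have hT2 : ‖x' - y‖ ^ s₂ / ‖x' - x''‖ ^ s₃ * (‖K x'' y‖ * ‖f x' - f x''‖)
        ≤ M * (A₁ * B₂) := by
      have e2 : ‖x' - y‖ ^ s₂ / ‖x' - x''‖ ^ s₃ * (‖K x'' y‖ * ‖f x' - f x''‖)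
          = (‖x' - y‖ ^ s₂ / ‖x'' - y‖ ^ s₁) *
            ((‖x'' - y‖ ^ s₁ * ‖K x'' y‖) * (‖f x' - f x''‖ / ‖x' - x''‖ ^ s₃)) := by
        field_simp
      rw [e2]
      exact mul_le_mul hdiv
        (mul_le_mul hKA hfH (by positivity) hA₁0)
        (by positivity) hM0.le
    calc ‖x' - y‖ ^ s₂ / ‖x' - x''‖ ^ s₃ * ‖K x' y * f x' - K x'' y * f x''‖
        ≤ ‖x' - y‖ ^ s₂ / ‖x' - x''‖ ^ s₃ *
            (‖K x' y - K x'' y‖ * ‖f x'‖ + ‖K x'' y‖ * ‖f x' - f x''‖) :=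
          mul_le_mul_of_nonneg_left hsplit (by positivity)
      _ = ‖x' - y‖ ^ s₂ / ‖x' - x''‖ ^ s₃ * ‖K x' y - K x'' y‖ * ‖f x'‖
          + ‖x' - y‖ ^ s₂ / ‖x' - x''‖ ^ s₃ * (‖K x'' y‖ * ‖f x' - f x''‖) := by ring
      _ ≤ A₂ * B₁ + M * (A₁ * B₂) := add_le_add hT1 hT2
  have hmem : memK X Y s₁ s₂ s₃ (fun x y => K x y * f x) := by
    refine ⟨?_, ⟨A₁ * B₁, P1⟩, ⟨A₂ * B₁ + M * (A₁ * B₂), P2⟩⟩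
    exact hKc.mul (hfc.comp continuous_fst.continuousOn (fun p hp => hp.1.1))
  refine ⟨hmem, ?_⟩
  have hS1 : sSup (kSet1 X Y s₁ (fun x y => K x y * f x)) ≤ A₁ * B₁ :=
    Real.sSup_le P1 (mul_nonneg hA₁0 hB₁0)
  have hS2 : sSup (kSet2 X Y s₂ s₃ (fun x y => K x y * f x)) ≤ A₂ * B₁ + M * (A₁ * B₂) :=
    Real.sSup_le P2 (by positivity)
  have hfin : kNorm X Y s₁ s₂ s₃ (fun x y => K x y * f x)
      ≤ A₁ * B₁ + (A₂ * B₁ + M * (A₁ * B₂)) := add_le_add hS1 hS2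
  refine hfin.trans ?_
  show A₁ * B₁ + (A₂ * B₁ + M * (A₁ * B₂)) ≤ (1 + M) * kNorm X Y s₁ s₂ s₃ K * hNorm X s₃ f
  rw [kNorm, hNorm, ← hA₁def, ← hA₂def, ← hB₁def, ← hB₂def]
  nlinarith [mul_nonneg hA₁0 hB₂0, mul_nonneg hA₂0 hB₂0, mul_nonneg hA₂0 hB₁0,
    mul_nonneg hA₁0 hB₁0, hM0.le,
    mul_nonneg hM0.le (mul_nonneg hA₁0 hB₁0),
    mul_nonneg hM0.le (mul_nonneg hA₂0 hB₁0),
    mul_nonneg hM0.le (mul_nonneg hA₂0 hB₂0)]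
end
end

section
/- Let n ≥ 1 and h ≥ 0. If k : ℝⁿ∖{0} → ℂ is locally Lipschitz and positively homogeneous of degree −h, then the convolution kernel K(x,y) := k(x−y) belongs to K_{h,h+1,1}(ℝⁿ×ℝⁿ); moreover the map k ↦ k(x−y), from the Banach space of such functions (normed by ‖k‖_{C^{0,1}(∂B_n(0,1))}) to K_{h,h+1,1}(ℝⁿ×ℝⁿ), is linear and continuous. In particular, |k(x'−y)−k(x''−y)| ≤ (2+2h)·2^{h+1}·max{sup_{∂B_n(0,1)}|k|, |k : ∂B_n(0,1)|₁}·|x'−x''|/|x'−y|^{h+1} whenever x'≠x'' and y ∉ B_n(x',2|x'−x''|). -/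
open Set Metric

noncomputable section

/-- Sup of `‖k‖` on the unit sphere. -/
def sphSup {n : ℕ} (k : Euc n → ℂ) : ℝ :=
  sSup ((fun θ => ‖k θ‖) '' sphere (0 : Euc n) 1)

/-- The Lipschitz constant (seminorm) of `k` on the unit sphere. -/
def sphLip {n : ℕ} (k : Euc n → ℂ) : ℝ :=
  sSup {c | ∃ θ ∈ sphere (0 : Euc n) 1, ∃ θ' ∈ sphere (0 : Euc n) 1, θ ≠ θ' ∧
            c = ‖k θ - k θ'‖ / ‖θ - θ'‖}

lemma aux_rpow_diff (h : ℝ) (hh : 0 ≤ h) {s t : ℝ} (hs : 0 < s) (hst : s ≤ t) :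
    |s ^ (-h) - t ^ (-h)| ≤ h * s ^ (-h - 1) * (t - s) := by
  rcases eq_or_lt_of_le hst with rfl | hlt
  · simp
  have hne : ∀ x ∈ Icc s t, (x : ℝ) ≠ 0 := fun x hx => (lt_of_lt_of_le hs hx.1).ne'
  have hcont : ContinuousOn (fun x : ℝ => x ^ (-h)) (Icc s t) := fun x hx =>
    ((Real.hasDerivAt_rpow_const (p := -h) (Or.inl (hne x hx))).continuousAt).continuousWithinAt
  have hdiff : DifferentiableOn ℝ (fun x : ℝ => x ^ (-h)) (Ioo s t) := fun x hx =>
    ((Real.hasDerivAt_rpow_const (p := -h)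
      (Or.inl (hne x (Ioo_subset_Icc_self hx)))).differentiableAt).differentiableWithinAt
  obtain ⟨c, hc, hderiv⟩ := exists_deriv_eq_slope (fun x : ℝ => x ^ (-h)) hlt hcont hdiff
  have hc0 : 0 < c := lt_trans hs hc.1
  have hd : deriv (fun x : ℝ => x ^ (-h)) c = -h * c ^ (-h - 1) :=
    (Real.hasDerivAt_rpow_const (p := -h) (Or.inl hc0.ne')).deriv
  rw [hd] at hderiv
  have hts : 0 < t - s := sub_pos.2 hlt
  have key : s ^ (-h) - t ^ (-h) = h * c ^ (-h - 1) * (t - s) := by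
    have := hderiv
    field_simp at this ⊢
    nlinarith [this]
  rw [key, abs_of_nonneg (by positivity)]
  have hcs : c ^ (-h - 1) ≤ s ^ (-h - 1) :=
    Real.rpow_le_rpow_of_nonpos hs hc.1.le (by linarith)
  have : 0 ≤ h * (t-s) := by positivity
  nlinarith [mul_le_mul_of_nonneg_left hcs this]

lemma aux_lip {n : ℕ} (hn : 1 ≤ n) {k : Euc n → ℂ}
    (hloc : ∀ x : Euc n, x ≠ 0 → ∃ r > 0, ∃ L : NNReal, LipschitzOnWith L k (ball x r)) :
    ∃ L : ℝ, 0 ≤ L ∧ ∀ θ ∈ sphere (0:Euc n) 1, ∀ θ' ∈ sphere (0:Euc n) 1,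
      ‖k θ - k θ'‖ ≤ L * ‖θ - θ'‖ := by
  haveI : Nonempty (Fin n) := ⟨⟨0, hn⟩⟩
  have hsne : (sphere (0:Euc n) 1).Nonempty := NormedSpace.sphere_nonempty.mpr zero_le_one
  have hsph : ∀ x : Euc n, x ∈ sphere (0:Euc n) 1 → x ≠ 0 := by
    intro x hx h0
    simp [h0] at hx
  have key : ∀ x ∈ sphere (0:Euc n) 1, ∃ r > 0, ∃ L : NNReal, LipschitzOnWith L k (ball x r) :=
    fun x hx => hloc x (hsph x hx)
  choose! r hr L hlip using key
  have hcont : ContinuousOn k (sphere (0:Euc n) 1) := by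
    intro x hx
    exact (((hlip x hx).continuousOn).continuousAt
      (ball_mem_nhds x (hr x hx))).continuousWithinAt
  obtain ⟨B, hB⟩ := (isCompact_sphere (0:Euc n) 1).bddAbove_image (hcont.norm)
  have hB0 : 0 ≤ B := by
    obtain ⟨θ₀, hθ₀⟩ := hsne
    exact le_trans (norm_nonneg _) (hB ⟨θ₀, hθ₀, rfl⟩)
  obtain ⟨b, hbsub, hbfin, hbcov⟩ :=
    (isCompact_sphere (0:Euc n) 1).elim_finite_subcover_image
      (fun x hx => isOpen_ball (x := x) (ε := r x / 2))
      (fun x hx => mem_biUnion hx (mem_ball_self (by linarith [hr x hx])))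
  obtain ⟨θ₀, hθ₀⟩ := hsne
  have hbne : b.Nonempty := by
    rcases mem_iUnion₂.1 (hbcov hθ₀) with ⟨x, hx, _⟩
    exact ⟨x, hx⟩
  set T : Finset (Euc n) := hbfin.toFinset with hT
  have hTne : T.Nonempty := by simpa [hT] using hbne
  have hmemT : ∀ x, x ∈ T ↔ x ∈ b := fun x => hbfin.mem_toFinset
  set δ : ℝ := T.inf' hTne (fun x => r x / 2) with hδ
  have hδpos : 0 < δ := by
    rw [hδ, Finset.lt_inf'_iff]
    intro x hx
    linarith [hr x (hbsub ((hmemT x).1 hx))]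
  set Lm : ℝ := T.sup' hTne (fun x => (L x : ℝ)) with hLm
  refine ⟨max Lm (2 * B / δ), le_trans (by positivity) (le_max_right _ _), ?_⟩
  intro θ hθ θ' hθ'
  rcases lt_or_ge (dist θ θ') δ with hlt | hge
  · rcases mem_iUnion₂.1 (hbcov hθ) with ⟨x, hx, hθx⟩
    have hxT : x ∈ T := (hmemT x).2 hx
    have hxS : x ∈ sphere (0:Euc n) 1 := hbsub hx
    have hδx : δ ≤ r x / 2 := Finset.inf'_le _ hxT
    have h1 : θ ∈ ball x (r x) := by
      have := mem_ball.1 hθx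
      exact mem_ball.2 (by linarith)
    have h2 : θ' ∈ ball x (r x) := by
      rw [mem_ball]
      calc dist θ' x ≤ dist θ' θ + dist θ x := dist_triangle _ _ _
        _ < δ + r x / 2 := by
            have := mem_ball.1 hθx
            rw [dist_comm] at hlt
            linarith
        _ ≤ r x := by linarith
    have := (hlip x hxS).dist_le_mul θ h1 θ' h2
    rw [dist_eq_norm, dist_eq_norm] at this
    calc ‖k θ - k θ'‖ ≤ (L x : ℝ) * ‖θ - θ'‖ := this
      _ ≤ max Lm (2 * B / δ) * ‖θ - θ'‖ := by
          apply mul_le_mul_of_nonneg_right _ (norm_nonneg _)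
          rw [hLm]
          exact le_trans (Finset.le_sup' (fun x => (L x : ℝ)) hxT) (le_max_left _ _)
  · have hnb : ‖k θ - k θ'‖ ≤ 2 * B :=
      calc ‖k θ - k θ'‖ ≤ ‖k θ‖ + ‖k θ'‖ := norm_sub_le _ _
        _ ≤ B + B := add_le_add (hB ⟨θ, hθ, rfl⟩) (hB ⟨θ', hθ', rfl⟩)
        _ = 2 * B := by ring
    have hd : ‖θ - θ'‖ = dist θ θ' := (dist_eq_norm _ _).symm
    rw [hd]
    calc ‖k θ - k θ'‖ ≤ 2 * B := hnb
      _ = (2 * B / δ) * δ := by field_simp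
      _ ≤ (2 * B / δ) * dist θ θ' := by
          apply mul_le_mul_of_nonneg_left hge (by positivity)
      _ ≤ max Lm (2 * B / δ) * dist θ θ' :=
          mul_le_mul_of_nonneg_right (le_max_right _ _) dist_nonneg

lemma aux_coef {h E N : ℝ} (hh : 0 ≤ h) (hE : 1 ≤ E) (hN : 0 ≤ N) :
    2 * N + h * E * N ≤ (2 + 2 * h) * E * N := by
  nlinarith [mul_nonneg hN (by linarith : (0:ℝ) ≤ E - 1),
    mul_nonneg hh (mul_nonneg (by linarith : (0:ℝ) ≤ E) hN)]

set_option maxHeartbeats 1000000 in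
/-- If `k` is locally Lipschitz on `ℝⁿ \ {0}` and positively homogeneous of degree `-h`
with `h ≥ 0`, then the convolution kernel `k(x-y)` belongs to `𝒦_{h,h+1,1}(ℝⁿ×ℝⁿ)`,
the map `k ↦ k(x-y)` is linear and continuous, and the explicit Lipschitz-type
inequality with constant `(2+2h)·2^{h+1}·max{sup|k|, Lip(k)}` on the sphere holds. -/
theorem stmt_11 {n : ℕ} (hn : 1 ≤ n) (h : ℝ) (hh : 0 ≤ h) :
    ∃ C > (0 : ℝ), ∀ k : Euc n → ℂ,
      (∀ x : Euc n, x ≠ 0 → ∃ s ∈ nhdsWithin x {y : Euc n | y ≠ 0},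
          ∃ L : NNReal, LipschitzOnWith L k s) →
      (∀ t : ℝ, 0 < t → ∀ x : Euc n, x ≠ 0 → k (t • x) = ((t ^ (-h) : ℝ) : ℂ) * k x) →
      (memK (univ : Set (Euc n)) univ h (h + 1) 1 (fun x y => k (x - y)) ∧
        kNorm (univ : Set (Euc n)) univ h (h + 1) 1 (fun x y => k (x - y)) ≤
          C * max (sphSup k) (sphLip k)) ∧
      ∀ x' x'' y : Euc n, x' ≠ x'' → 2 * ‖x' - x''‖ ≤ ‖x' - y‖ →
        ‖k (x' - y) - k (x'' - y)‖ ≤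
          (2 + 2 * h) * 2 ^ (h + 1) * max (sphSup k) (sphLip k) *
            ‖x' - x''‖ / ‖x' - y‖ ^ (h + 1) := by
  have hE1 : (1:ℝ) ≤ 2 ^ (h + 1) := by
    calc (1:ℝ) = 2 ^ (0:ℝ) := (Real.rpow_zero 2).symm
      _ ≤ 2 ^ (h+1) := Real.rpow_le_rpow_of_exponent_le one_le_two (by linarith)
  refine ⟨1 + (2 + 2*h) * 2 ^ (h+1), by positivity, ?_⟩
  intro k hk hom
  haveI : Nonempty (Fin n) := ⟨⟨0, hn⟩⟩
  have hsne : (sphere (0:Euc n) 1).Nonempty := NormedSpace.sphere_nonempty.mpr zero_le_one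
  -- local Lipschitz on balls
  have hloc : ∀ x : Euc n, x ≠ 0 → ∃ r > 0, ∃ L : NNReal, LipschitzOnWith L k (ball x r) := by
    intro x hx
    obtain ⟨s, hs, L, hL⟩ := hk x hx
    rw [mem_nhdsWithin_iff] at hs
    obtain ⟨ε, hε, hsub⟩ := hs
    have hop : IsOpen {y : Euc n | y ≠ 0} := isOpen_ne
    obtain ⟨ε₂, hε₂, hb2⟩ := Metric.isOpen_iff.1 hop x hx
    refine ⟨min ε ε₂, lt_min hε hε₂, L, hL.mono ?_⟩
    intro z hz
    exact hsub ⟨ball_subset_ball (min_le_left _ _) hz,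
      hb2 (ball_subset_ball (min_le_right _ _) hz)⟩
  have hcont : ∀ x : Euc n, x ≠ 0 → ContinuousAt k x := by
    intro x hx
    obtain ⟨r, hr, L, hL⟩ := hloc x hx
    exact (hL.continuousOn).continuousAt (ball_mem_nhds x hr)
  -- sup bound on the sphere
  have hcontS : ContinuousOn k (sphere (0:Euc n) 1) := by
    intro x hx
    refine (hcont x ?_).continuousWithinAt
    intro h0; simp [h0] at hx
  have hbdd : BddAbove ((fun θ => ‖k θ‖) '' sphere (0:Euc n) 1) :=
    (isCompact_sphere (0:Euc n) 1).bddAbove_image (hcontS.norm)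
  have hSB : ∀ θ ∈ sphere (0:Euc n) 1, ‖k θ‖ ≤ sphSup k :=
    fun θ hθ => le_csSup hbdd ⟨θ, hθ, rfl⟩
  have hS0 : 0 ≤ sphSup k := by
    obtain ⟨θ₀, hθ₀⟩ := hsne
    exact le_trans (norm_nonneg _) (hSB θ₀ hθ₀)
  set M : ℝ := max (sphSup k) (sphLip k) with hM
  have hM0 : 0 ≤ M := le_trans hS0 (le_max_left _ _)
  have hSM : ∀ θ ∈ sphere (0:Euc n) 1, ‖k θ‖ ≤ M :=
    fun θ hθ => le_trans (hSB θ hθ) (le_max_left _ _)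
  -- Lipschitz bound by M on the sphere
  obtain ⟨L₀, hL₀0, hL₀⟩ := aux_lip hn hloc
  have hbdd2 : BddAbove {c | ∃ θ ∈ sphere (0:Euc n) 1, ∃ θ' ∈ sphere (0:Euc n) 1, θ ≠ θ' ∧
      c = ‖k θ - k θ'‖ / ‖θ - θ'‖} := by
    refine ⟨L₀, ?_⟩
    rintro c ⟨θ, hθ, θ', hθ', hne, rfl⟩
    have hpos : 0 < ‖θ - θ'‖ := norm_pos_iff.2 (sub_ne_zero.2 hne)
    exact (div_le_iff₀ hpos).2 (hL₀ θ hθ θ' hθ')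
  have hLipM : ∀ θ ∈ sphere (0:Euc n) 1, ∀ θ' ∈ sphere (0:Euc n) 1,
      ‖k θ - k θ'‖ ≤ M * ‖θ - θ'‖ := by
    intro θ hθ θ' hθ'
    rcases eq_or_ne θ θ' with rfl | hne
    · simp
    have hpos : 0 < ‖θ - θ'‖ := norm_pos_iff.2 (sub_ne_zero.2 hne)
    have hmem : ‖k θ - k θ'‖ / ‖θ - θ'‖ ≤ sphLip k :=
      le_csSup hbdd2 ⟨θ, hθ, θ', hθ', hne, rfl⟩
    have : ‖k θ - k θ'‖ / ‖θ - θ'‖ ≤ M := le_trans hmem (le_max_right _ _)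
    calc ‖k θ - k θ'‖ = (‖k θ - k θ'‖ / ‖θ - θ'‖) * ‖θ - θ'‖ := by field_simp
      _ ≤ M * ‖θ - θ'‖ := mul_le_mul_of_nonneg_right this (norm_nonneg _)
  -- homogeneity formula
  have hsphmem : ∀ x : Euc n, x ≠ 0 → (‖x‖⁻¹ • x) ∈ sphere (0:Euc n) 1 := by
    intro x hx
    rw [mem_sphere_zero_iff_norm, norm_smul, norm_inv, norm_norm,
      inv_mul_cancel₀ (norm_ne_zero_iff.2 hx)]
  have hhom' : ∀ x : Euc n, x ≠ 0 → k x = ((‖x‖ ^ (-h) : ℝ) : ℂ) * k (‖x‖⁻¹ • x) := by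
    intro x hx
    have hnx : (0:ℝ) < ‖x‖ := norm_pos_iff.2 hx
    have hu : (‖x‖⁻¹ • x) ≠ 0 := smul_ne_zero (inv_ne_zero hnx.ne') hx
    have := hom ‖x‖ hnx (‖x‖⁻¹ • x) hu
    rw [smul_smul, mul_inv_cancel₀ hnx.ne', one_smul] at this
    exact this
  have hdecay : ∀ x : Euc n, x ≠ 0 → ‖k x‖ ≤ sphSup k * ‖x‖ ^ (-h) := by
    intro x hx
    have hnx : (0:ℝ) < ‖x‖ := norm_pos_iff.2 hx
    rw [hhom' x hx, norm_mul, Complex.norm_real, Real.norm_eq_abs,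
      abs_of_pos (Real.rpow_pos_of_pos hnx _)]
    rw [mul_comm]
    exact mul_le_mul_of_nonneg_right (hSB _ (hsphmem x hx)) (Real.rpow_pos_of_pos hnx _).le
  -- main difference estimate
  have hmain : ∀ a b : Euc n, a ≠ b → 2 * ‖a - b‖ ≤ ‖a‖ →
      ‖k a - k b‖ ≤ (2 + 2*h) * 2 ^ (h+1) * M * ‖a - b‖ / ‖a‖ ^ (h+1) := by
    intro a b hne hsep
    have hab : 0 < ‖a - b‖ := norm_pos_iff.2 (sub_ne_zero.2 hne)
    have ha : 0 < ‖a‖ := by linarith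
    have ha0 : a ≠ 0 := norm_pos_iff.1 ha
    have hba : ‖a‖ - ‖b‖ ≤ ‖a - b‖ := norm_sub_norm_le a b
    have hb : ‖a‖ / 2 ≤ ‖b‖ := by linarith
    have hb0' : (0:ℝ) < ‖b‖ := by linarith
    have hb0 : b ≠ 0 := norm_pos_iff.1 hb0'
    set ua := ‖a‖⁻¹ • a with hua
    set ub := ‖b‖⁻¹ • b with hub
    have hua1 : ua ∈ sphere (0:Euc n) 1 := hsphmem a ha0
    have hub1 : ub ∈ sphere (0:Euc n) 1 := hsphmem b hb0
    -- decomposition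
    have hdec : k a - k b = ((‖a‖ ^ (-h) : ℝ) : ℂ) * (k ua - k ub) +
        (((‖a‖ ^ (-h) - ‖b‖ ^ (-h) : ℝ)) : ℂ) * k ub := by
      rw [hhom' a ha0, hhom' b hb0]
      push_cast
      ring
    -- bound on ‖ua - ub‖
    have hudiff : ‖ua - ub‖ ≤ 2 * ‖a - b‖ / ‖a‖ := by
      have hid : ua - ub = ‖a‖⁻¹ • (a - b) + (‖a‖⁻¹ - ‖b‖⁻¹) • b := by
        rw [hua, hub, smul_sub, sub_smul]
        abel
      have h2 : ‖(‖a‖⁻¹ - ‖b‖⁻¹) • b‖ ≤ ‖a - b‖ / ‖a‖ := by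
        rw [norm_smul, Real.norm_eq_abs]
        have he : ‖a‖⁻¹ - ‖b‖⁻¹ = (‖b‖ - ‖a‖) / (‖a‖ * ‖b‖) := by
          field_simp
        rw [he, abs_div, abs_of_pos (by positivity : (0:ℝ) < ‖a‖ * ‖b‖)]
        have habs : |‖b‖ - ‖a‖| ≤ ‖a - b‖ := by
          rw [abs_sub_comm]
          exact abs_norm_sub_norm_le a b
        calc |‖b‖ - ‖a‖| / (‖a‖ * ‖b‖) * ‖b‖ = |‖b‖ - ‖a‖| / ‖a‖ := by field_simp
          _ ≤ ‖a - b‖ / ‖a‖ := by gcongr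
      have h1 : ‖‖a‖⁻¹ • (a - b)‖ = ‖a - b‖ / ‖a‖ := by
        rw [norm_smul, Real.norm_eq_abs, abs_of_pos (inv_pos.2 ha)]
        field_simp
      calc ‖ua - ub‖ ≤ ‖‖a‖⁻¹ • (a - b)‖ + ‖(‖a‖⁻¹ - ‖b‖⁻¹) • b‖ := by
            rw [hid]; exact norm_add_le _ _
        _ ≤ ‖a - b‖ / ‖a‖ + ‖a - b‖ / ‖a‖ := by rw [h1]; linarith
        _ = 2 * ‖a - b‖ / ‖a‖ := by ring
    -- rpow difference bound
    have hrpow : |‖a‖ ^ (-h) - ‖b‖ ^ (-h)| ≤ h * (‖a‖/2) ^ (-h - 1) * ‖a - b‖ := by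
      have hmono : ∀ s : ℝ, ‖a‖/2 ≤ s → 0 < s → s ^ (-h-1) ≤ (‖a‖/2) ^ (-h-1) :=
        fun s hs hs0 => Real.rpow_le_rpow_of_nonpos (by positivity) hs (by linarith)
      rcases le_total ‖a‖ ‖b‖ with hc | hc
      · have := aux_rpow_diff h hh ha hc
        calc |‖a‖ ^ (-h) - ‖b‖ ^ (-h)| ≤ h * ‖a‖ ^ (-h-1) * (‖b‖ - ‖a‖) := this
          _ ≤ h * (‖a‖/2) ^ (-h-1) * ‖a - b‖ := by
              have h1 := hmono ‖a‖ (by linarith) ha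
              have h2 : ‖b‖ - ‖a‖ ≤ ‖a - b‖ := by
                have := abs_norm_sub_norm_le a b
                rw [abs_sub_comm] at this
                exact le_trans (le_abs_self _) this
              have hd0 : (0:ℝ) ≤ ‖b‖ - ‖a‖ := by linarith
              exact mul_le_mul (mul_le_mul_of_nonneg_left h1 hh) h2 hd0 (by positivity)
      · have := aux_rpow_diff h hh hb0' hc
        rw [abs_sub_comm]
        calc |‖b‖ ^ (-h) - ‖a‖ ^ (-h)| ≤ h * ‖b‖ ^ (-h-1) * (‖a‖ - ‖b‖) := this
          _ ≤ h * (‖a‖/2) ^ (-h-1) * ‖a - b‖ := by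
              have h1 := hmono ‖b‖ hb hb0'
              have h2 : ‖a‖ - ‖b‖ ≤ ‖a - b‖ := norm_sub_norm_le a b
              have hd0 : (0:ℝ) ≤ ‖a‖ - ‖b‖ := by linarith
              exact mul_le_mul (mul_le_mul_of_nonneg_left h1 hh) h2 hd0 (by positivity)
    have hhalf : (‖a‖/2) ^ (-h-1) = 2 ^ (h+1) * ‖a‖ ^ (-h-1) := by
      rw [Real.div_rpow ha.le (by norm_num : (0:ℝ) ≤ 2), show (-h-1:ℝ) = -(h+1) by ring,
        Real.rpow_neg (show (0:ℝ) ≤ 2 by norm_num) (h+1), div_eq_mul_inv, inv_inv]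
      ring
    -- combine
    have hnorm : ‖k a - k b‖ ≤ ‖a‖ ^ (-h) * ‖k ua - k ub‖ +
        |‖a‖ ^ (-h) - ‖b‖ ^ (-h)| * ‖k ub‖ := by
      rw [hdec]
      refine le_trans (norm_add_le _ _) ?_
      rw [norm_mul, norm_mul, Complex.norm_real, Complex.norm_real,
        Real.norm_eq_abs, Real.norm_eq_abs, abs_of_pos (Real.rpow_pos_of_pos ha _)]
    have hterm1 : ‖a‖ ^ (-h) * ‖k ua - k ub‖ ≤ 2 * M * ‖a - b‖ * ‖a‖ ^ (-h-1) := by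
      have h1 : ‖k ua - k ub‖ ≤ M * (2 * ‖a - b‖ / ‖a‖) :=
        le_trans (hLipM ua hua1 ub hub1) (mul_le_mul_of_nonneg_left hudiff hM0)
      have h2 : ‖a‖ ^ (-h) * (M * (2 * ‖a - b‖ / ‖a‖)) = 2 * M * ‖a - b‖ * ‖a‖ ^ (-h-1) := by
        rw [show (-h-1) = -h + (-1:ℝ) by ring, Real.rpow_add ha, Real.rpow_neg_one]
        field_simp
      rw [← h2]
      exact mul_le_mul_of_nonneg_left h1 (Real.rpow_pos_of_pos ha _).le
    have hterm2 : |‖a‖ ^ (-h) - ‖b‖ ^ (-h)| * ‖k ub‖ ≤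
        h * 2 ^ (h+1) * M * ‖a - b‖ * ‖a‖ ^ (-h-1) := by
      have h1 : ‖k ub‖ ≤ M := hSM ub hub1
      calc |‖a‖ ^ (-h) - ‖b‖ ^ (-h)| * ‖k ub‖
          ≤ (h * (‖a‖/2) ^ (-h-1) * ‖a - b‖) * M := by
            apply mul_le_mul hrpow h1 (norm_nonneg _) (by positivity)
        _ = h * 2 ^ (h+1) * M * ‖a - b‖ * ‖a‖ ^ (-h-1) := by rw [hhalf]; ring
    have hfin : ‖k a - k b‖ ≤ (2 + 2*h) * 2 ^ (h+1) * M * ‖a - b‖ * ‖a‖ ^ (-h-1) := by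
      have hP : (0:ℝ) ≤ ‖a‖ ^ (-h-1) := (Real.rpow_pos_of_pos ha _).le
      have hN : (0:ℝ) ≤ M * ‖a - b‖ := mul_nonneg hM0 hab.le
      have hcoef : 2 * M * ‖a - b‖ + h * 2 ^ (h+1) * M * ‖a - b‖ ≤
          (2 + 2*h) * 2 ^ (h+1) * M * ‖a - b‖ := by
        calc 2 * M * ‖a - b‖ + h * 2 ^ (h+1) * M * ‖a - b‖
            = 2 * (M * ‖a - b‖) + h * 2 ^ (h+1) * (M * ‖a - b‖) := by ring
          _ ≤ (2 + 2*h) * 2 ^ (h+1) * (M * ‖a - b‖) := aux_coef hh hE1 hN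
          _ = (2 + 2*h) * 2 ^ (h+1) * M * ‖a - b‖ := by ring
      calc ‖k a - k b‖ ≤ ‖a‖ ^ (-h) * ‖k ua - k ub‖ +
            |‖a‖ ^ (-h) - ‖b‖ ^ (-h)| * ‖k ub‖ := hnorm
        _ ≤ 2 * M * ‖a - b‖ * ‖a‖ ^ (-h-1) + h * 2 ^ (h+1) * M * ‖a - b‖ * ‖a‖ ^ (-h-1) :=
            add_le_add hterm1 hterm2
        _ = (2 * M * ‖a - b‖ + h * 2 ^ (h+1) * M * ‖a - b‖) * ‖a‖ ^ (-h-1) := by ring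
        _ ≤ ((2 + 2*h) * 2 ^ (h+1) * M * ‖a - b‖) * ‖a‖ ^ (-h-1) :=
            mul_le_mul_of_nonneg_right hcoef hP
        _ = (2 + 2*h) * 2 ^ (h+1) * M * ‖a - b‖ * ‖a‖ ^ (-h-1) := by ring
    have hPeq : ‖a‖ ^ (-h-1) = (‖a‖ ^ (h+1))⁻¹ := by
      rw [show (-h-1 : ℝ) = -(h+1) by ring, Real.rpow_neg ha.le]
    rw [div_eq_mul_inv, ← hPeq]
    exact hfin
  constructor
  · constructor
    · refine ⟨?_, ?_, ?_⟩
      · intro p hp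
        have hne : p.1 ≠ p.2 := hp.2
        have hca : ContinuousAt (fun p : Euc n × Euc n => k (p.1 - p.2)) p :=
          ContinuousAt.comp (g := k) (f := fun p : Euc n × Euc n => p.1 - p.2)
            (hcont (p.1 - p.2) (sub_ne_zero.2 hne))
            (continuousAt_fst.sub continuousAt_snd)
        exact hca.continuousWithinAt
      · refine ⟨sphSup k, ?_⟩
        rintro c ⟨x, -, y, -, hxy, rfl⟩
        have hxy0 : (0:ℝ) < ‖x - y‖ := norm_pos_iff.2 (sub_ne_zero.2 hxy)
        calc ‖x - y‖ ^ h * ‖k (x - y)‖ ≤ ‖x - y‖ ^ h * (sphSup k * ‖x - y‖ ^ (-h)) :=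
              mul_le_mul_of_nonneg_left (hdecay _ (sub_ne_zero.2 hxy))
                (Real.rpow_pos_of_pos hxy0 _).le
          _ = sphSup k := by
              rw [mul_comm (sphSup k) _, ← mul_assoc, ← Real.rpow_add hxy0]
              simp
      · refine ⟨(2 + 2*h) * 2 ^ (h+1) * M, ?_⟩
        rintro c ⟨x', -, x'', -, hne, y, -, hsep, rfl⟩
        have hxx : (0:ℝ) < ‖x' - x''‖ := norm_pos_iff.2 (sub_ne_zero.2 hne)
        have hxy : (0:ℝ) < ‖x' - y‖ := by linarith
        have hd : (x' - y) - (x'' - y) = x' - x'' := by abel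
        have hb := hmain (x' - y) (x'' - y)
          (fun hcongr => hne (sub_left_injective hcongr)) (by rw [hd]; exact hsep)
        rw [hd] at hb
        rw [Real.rpow_one]
        calc ‖x' - y‖ ^ (h+1) / ‖x' - x''‖ * ‖k (x' - y) - k (x'' - y)‖
            ≤ ‖x' - y‖ ^ (h+1) / ‖x' - x''‖ *
              ((2 + 2*h) * 2 ^ (h+1) * M * ‖x' - x''‖ / ‖x' - y‖ ^ (h+1)) := by
              apply mul_le_mul_of_nonneg_left hb (by positivity)
          _ = (2 + 2*h) * 2 ^ (h+1) * M := by
              have hp : (0:ℝ) < ‖x' - y‖ ^ (h+1) := Real.rpow_pos_of_pos hxy _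
              field_simp
    · -- kNorm bound
      have hs1 : sSup (kSet1 (univ : Set (Euc n)) univ h (fun x y => k (x - y))) ≤ M := by
        apply Real.sSup_le _ hM0
        rintro c ⟨x, -, y, -, hxy, rfl⟩
        have hxy0 : (0:ℝ) < ‖x - y‖ := norm_pos_iff.2 (sub_ne_zero.2 hxy)
        calc ‖x - y‖ ^ h * ‖k (x - y)‖ ≤ ‖x - y‖ ^ h * (sphSup k * ‖x - y‖ ^ (-h)) :=
              mul_le_mul_of_nonneg_left (hdecay _ (sub_ne_zero.2 hxy))
                (Real.rpow_pos_of_pos hxy0 _).le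
          _ = sphSup k := by
              rw [mul_comm (sphSup k) _, ← mul_assoc, ← Real.rpow_add hxy0]
              simp
          _ ≤ M := le_max_left _ _
      have hs2 : sSup (kSet2 (univ : Set (Euc n)) univ (h+1) 1 (fun x y => k (x - y))) ≤
          (2 + 2*h) * 2 ^ (h+1) * M := by
        apply Real.sSup_le _ (by positivity)
        rintro c ⟨x', -, x'', -, hne, y, -, hsep, rfl⟩
        have hxx : (0:ℝ) < ‖x' - x''‖ := norm_pos_iff.2 (sub_ne_zero.2 hne)
        have hxy : (0:ℝ) < ‖x' - y‖ := by linarith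
        have hd : (x' - y) - (x'' - y) = x' - x'' := by abel
        have hb := hmain (x' - y) (x'' - y)
          (fun hcongr => hne (sub_left_injective hcongr)) (by rw [hd]; exact hsep)
        rw [hd] at hb
        rw [Real.rpow_one]
        calc ‖x' - y‖ ^ (h+1) / ‖x' - x''‖ * ‖k (x' - y) - k (x'' - y)‖
            ≤ ‖x' - y‖ ^ (h+1) / ‖x' - x''‖ *
              ((2 + 2*h) * 2 ^ (h+1) * M * ‖x' - x''‖ / ‖x' - y‖ ^ (h+1)) := by
              apply mul_le_mul_of_nonneg_left hb (by positivity)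
          _ = (2 + 2*h) * 2 ^ (h+1) * M := by
              have hp : (0:ℝ) < ‖x' - y‖ ^ (h+1) := Real.rpow_pos_of_pos hxy _
              field_simp
      have : (1 + (2 + 2*h) * 2 ^ (h+1)) * M = M + (2 + 2*h) * 2 ^ (h+1) * M := by ring
      rw [kNorm, this]
      exact add_le_add hs1 hs2
  · intro x' x'' y hne hsep
    have hd : (x' - y) - (x'' - y) = x' - x'' := by abel
    have hb := hmain (x' - y) (x'' - y)
      (fun hcongr => hne (sub_left_injective hcongr)) (by rw [hd]; exact hsep)
    rw [hd] at hb
    exact hb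
end
end

section
/- Let Y be a nonempty bounded subset of ℝⁿ and let F be a Lipschitz continuous function on ∂B_n(0,1) × [0, diam(Y)] with Lipschitz constant Lip(F) (with respect to the metric |θ'−θ''| + |r'−r''|). Then for all x',x'' ∈ Y with x' ≠ x'' and all y ∈ Y ∖ B_n(x',2|x'−x''|): |F((x'−y)/|x'−y|, |x'−y|) − F((x''−y)/|x''−y|, |x''−y|)| ≤ Lip(F)·(2 + diam(Y))·|x'−x''|/|x'−y|. -/
open Set Metric

section Normalize

variable {E : Type*} [NormedAddCommGroup E] [NormedSpace ℝ E]

theorem norm_inv_norm_smul_sub_inv_norm_smul_le {a b : E} (ha : a ≠ 0) (hb : b ≠ 0) :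
    ‖‖a‖⁻¹ • a - ‖b‖⁻¹ • b‖ ≤ 2 * ‖a - b‖ / ‖a‖ := by
  have hA : 0 < ‖a‖ := norm_pos_iff.mpr ha
  have hB : 0 < ‖b‖ := norm_pos_iff.mpr hb
  have hdecomp : ‖a‖⁻¹ • a - ‖b‖⁻¹ • b = ‖a‖⁻¹ • (a - b) + (‖a‖⁻¹ - ‖b‖⁻¹) • b := by
    rw [smul_sub, sub_smul]; abel
  have hscale : ‖(‖a‖⁻¹ - ‖b‖⁻¹) • b‖ = |‖b‖ - ‖a‖| / ‖a‖ := by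
    have h : (‖a‖⁻¹ - ‖b‖⁻¹) * ‖b‖ = (‖b‖ - ‖a‖) / ‖a‖ := by field_simp
    rw [norm_smul, Real.norm_eq_abs, ← abs_norm b, ← abs_mul, abs_norm, h, abs_div, abs_norm]
  calc ‖‖a‖⁻¹ • a - ‖b‖⁻¹ • b‖
      ≤ ‖‖a‖⁻¹ • (a - b)‖ + ‖(‖a‖⁻¹ - ‖b‖⁻¹) • b‖ := hdecomp ▸ norm_add_le _ _
    _ = ‖a - b‖ / ‖a‖ + |‖b‖ - ‖a‖| / ‖a‖ := by
        rw [hscale, norm_smul, norm_inv, norm_norm, inv_mul_eq_div]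
    _ ≤ ‖a - b‖ / ‖a‖ + ‖b - a‖ / ‖a‖ := by gcongr; exact abs_norm_sub_norm_le b a
    _ = 2 * ‖a - b‖ / ‖a‖ := by rw [norm_sub_rev b a]; ring

/-- The polar map `v ↦ (‖v‖⁻¹ • v, ‖v‖)` is Lipschitz away from the origin, for the sum metric,
with a constant inversely proportional to the distance to the origin. -/
theorem norm_inv_norm_smul_sub_add_abs_norm_sub_le {a b : E} {D : ℝ} (ha : a ≠ 0) (hb : b ≠ 0)
    (haD : ‖a‖ ≤ D) :
    ‖‖a‖⁻¹ • a - ‖b‖⁻¹ • b‖ + |‖a‖ - ‖b‖| ≤ (2 + D) * ‖a - b‖ / ‖a‖ := by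
  have hA : 0 < ‖a‖ := norm_pos_iff.mpr ha
  have hradial : |‖a‖ - ‖b‖| ≤ D * ‖a - b‖ / ‖a‖ :=
    calc |‖a‖ - ‖b‖| ≤ ‖a - b‖ := abs_norm_sub_norm_le a b
      _ = ‖a‖ * ‖a - b‖ / ‖a‖ := by field_simp
      _ ≤ D * ‖a - b‖ / ‖a‖ := by gcongr
  calc ‖‖a‖⁻¹ • a - ‖b‖⁻¹ • b‖ + |‖a‖ - ‖b‖|
      ≤ 2 * ‖a - b‖ / ‖a‖ + D * ‖a - b‖ / ‖a‖ :=
        add_le_add (norm_inv_norm_smul_sub_inv_norm_smul_le ha hb) hradial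
    _ = (2 + D) * ‖a - b‖ / ‖a‖ := by ring

end Normalize

theorem stmt_13_general {n : ℕ} (Y : Set (EuclideanSpace ℝ (Fin n)))
    (hYb : Bornology.IsBounded Y)
    (F : EuclideanSpace ℝ (Fin n) × ℝ → ℂ) (L : ℝ)
    (hF : ∀ θ' ∈ sphere (0 : EuclideanSpace ℝ (Fin n)) 1,
          ∀ θ'' ∈ sphere (0 : EuclideanSpace ℝ (Fin n)) 1,
          ∀ r' ∈ Icc (0 : ℝ) (diam Y), ∀ r'' ∈ Icc (0 : ℝ) (diam Y),
            ‖F (θ', r') - F (θ'', r'')‖ ≤ L * (‖θ' - θ''‖ + |r' - r''|)) :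
    ∀ x' ∈ Y, ∀ x'' ∈ Y, x' ≠ x'' → ∀ y ∈ Y, 2 * ‖x' - x''‖ ≤ ‖x' - y‖ →
      ‖F (‖x' - y‖⁻¹ • (x' - y), ‖x' - y‖) - F (‖x'' - y‖⁻¹ • (x'' - y), ‖x'' - y‖)‖ ≤
        L * (2 + diam Y) * ‖x' - x''‖ / ‖x' - y‖ := by
  intro x' hx' x'' hx'' hne y hy hfar
  have hdiff : (x' - y) - (x'' - y) = x' - x'' := sub_sub_sub_cancel_right x' x'' y
  have hd : 0 < ‖x' - x''‖ := norm_pos_iff.mpr (sub_ne_zero.mpr hne)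
  have ha : x' - y ≠ 0 := norm_pos_iff.mp (by linarith)
  have hb : x'' - y ≠ 0 := by
    have := norm_sub_norm_le (x' - y) (x'' - y)
    rw [hdiff] at this
    exact norm_pos_iff.mp (by linarith)
  have hr : ∀ z ∈ Y, ‖z - y‖ ∈ Icc 0 (diam Y) := fun z hz =>
    ⟨norm_nonneg _, dist_eq_norm z y ▸ dist_le_diam_of_mem hYb hz hy⟩
  have hθ : ∀ v : EuclideanSpace ℝ (Fin n), v ≠ 0 → ‖v‖⁻¹ • v ∈ sphere 0 1 := fun v hv =>
    mem_sphere_zero_iff_norm.mpr (norm_smul_inv_norm hv)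
  have hL : 0 ≤ L := by
    have hD : 0 < diam Y := (norm_pos_iff.mpr ha).trans_le (hr x' hx').2
    have h := hF _ (hθ _ ha) _ (hθ _ ha) 0 (left_mem_Icc.2 hD.le) _ (right_mem_Icc.2 hD.le)
    rw [sub_self, norm_zero, zero_add, zero_sub, abs_neg, abs_of_pos hD] at h
    exact nonneg_of_mul_nonneg_left (h.trans' (norm_nonneg _)) hD
  calc _ ≤ L * (‖‖x' - y‖⁻¹ • (x' - y) - ‖x'' - y‖⁻¹ • (x'' - y)‖ + |‖x' - y‖ - ‖x'' - y‖|) :=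
        hF _ (hθ _ ha) _ (hθ _ hb) _ (hr x' hx') _ (hr x'' hx'')
    _ ≤ L * ((2 + diam Y) * ‖x' - x''‖ / ‖x' - y‖) := by
        gcongr
        exact hdiff ▸ norm_inv_norm_smul_sub_add_abs_norm_sub_le ha hb (hr x' hx').2
    _ = L * (2 + diam Y) * ‖x' - x''‖ / ‖x' - y‖ := by ring

/-- If `Y ⊆ ℝⁿ` is nonempty and bounded and `F` is Lipschitz on
`∂B_n(0,1) × [0, diam Y]` with constant `L` (for the metric `|θ'-θ''| + |r'-r''|`),
then for `x', x'' ∈ Y`, `x' ≠ x''` and `y ∈ Y` outside `B_n(x', 2|x'-x''|)` one has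
the estimate with constant `L(2 + diam Y)`. -/
theorem stmt_13 {n : ℕ} (Y : Set (EuclideanSpace ℝ (Fin n)))
    (hY : Y.Nonempty) (hYb : Bornology.IsBounded Y)
    (F : EuclideanSpace ℝ (Fin n) × ℝ → ℂ) (L : ℝ)
    (hF : ∀ θ' ∈ sphere (0 : EuclideanSpace ℝ (Fin n)) 1,
          ∀ θ'' ∈ sphere (0 : EuclideanSpace ℝ (Fin n)) 1,
          ∀ r' ∈ Icc (0 : ℝ) (diam Y), ∀ r'' ∈ Icc (0 : ℝ) (diam Y),
            ‖F (θ', r') - F (θ'', r'')‖ ≤ L * (‖θ' - θ''‖ + |r' - r''|)) :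
    ∀ x' ∈ Y, ∀ x'' ∈ Y, x' ≠ x'' → ∀ y ∈ Y, 2 * ‖x' - x''‖ ≤ ‖x' - y‖ →
      ‖F (‖x' - y‖⁻¹ • (x' - y), ‖x' - y‖) - F (‖x'' - y‖⁻¹ • (x'' - y), ‖x'' - y‖)‖ ≤
        L * (2 + diam Y) * ‖x' - x''‖ / ‖x' - y‖ :=
  stmt_13_general Y hYb F L hF
end

section
/- Let α ∈ (0,1], let Ω be a bounded open subset of ℝⁿ of class C^{1,α} with outward unit normal ν, and let T be an invertible real n×n matrix. Then the kernel (x,y) ↦ (ν_h(x) − ν_h(y))/|T^{−1}(x−y)|^{n}, for (x,y) ∈ (∂Ω×∂Ω) minus the diagonal, belongs to the kernel class K_{n−α, n, α}(∂Ω×∂Ω), for each h ∈ {1,…,n}. -/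
open Set Metric

noncomputable section

/-- A bounded open subset of `ℝⁿ` of class `C^{1,α}`, together with its outward unit
normal field `ν`: near each boundary point, `Ω` is the sublevel set of a `C^{1,α}`
defining function with nonvanishing gradient, and `ν` is the normalized gradient. -/
def IsC1AlphaDomainWithNormal {n : ℕ} (α : ℝ) (Ω : Set (Euc n)) (ν : Euc n → Euc n) : Prop :=
  IsOpen Ω ∧ Bornology.IsBounded Ω ∧ Ω.Nonempty ∧
  ∀ x ∈ frontier Ω, ∃ r > (0 : ℝ), ∃ f : Euc n → ℝ,
    ContDiffOn ℝ 1 f (ball x r) ∧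
    (∃ c : ℝ, ∀ y ∈ ball x r, ∀ z ∈ ball x r,
        ‖fderiv ℝ f y - fderiv ℝ f z‖ ≤ c * ‖y - z‖ ^ α) ∧
    (∀ y ∈ ball x r, gradient f y ≠ 0) ∧
    Ω ∩ ball x r = {y | f y < 0} ∩ ball x r ∧
    ∀ y ∈ frontier Ω ∩ ball x r, ν y = ‖gradient f y‖⁻¹ • gradient f y

/-! The normal `ν` is `α`-Hölder on `∂Ω`: near each boundary point it is the normalized gradient
of a `C^{1,α}` defining function whose gradient stays away from zero, and normalization is
Lipschitz away from the origin; compactness of `∂Ω` and `‖ν‖ = 1` make the local bounds global.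
For any `α`-Hölder `g` and `k(z) = ‖L z‖⁻ⁿ`, the kernel `(g x - g y) k(x - y)` is then of type
`𝒦_{n-α,n,α}`: its size is controlled by `|g x - g y| ≲ |x - y|^α`, and its difference in `x`
splits as `(g x' - g x'') k(x' - y) + (g x'' - g y) (k(x' - y) - k(x'' - y))`, where `k` being
comparable to `|z|⁻ⁿ` gives `|k(z) - k(w)| ≲ |z - w| / |z|ⁿ⁺¹` as long as `2|z - w| ≤ |z|`;
the factor `(|x' - x''| / |x' - y|)^(1-α) ≤ 1` absorbs the mismatch of exponents. -/

open scoped NNReal Topology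

theorem NormedSpace.norm_normalize_sub_normalize_le {E : Type*} [NormedAddCommGroup E]
    [NormedSpace ℝ E] {a b : E} (ha : a ≠ 0) (hb : b ≠ 0) :
    ‖normalize a - normalize b‖ ≤ 2 * ‖a - b‖ / ‖a‖ := by
  rw [normalize, normalize]
  have ha' : 0 < ‖a‖ := norm_pos_iff.mpr ha
  have hb' : 0 < ‖b‖ := norm_pos_iff.mpr hb
  have hsplit : ‖a‖⁻¹ • a - ‖b‖⁻¹ • b = ‖a‖⁻¹ • (a - b) + (‖a‖⁻¹ - ‖b‖⁻¹) • b := by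
    rw [smul_sub, sub_smul]; abel
  have hscale : ‖(‖a‖⁻¹ - ‖b‖⁻¹) • b‖ ≤ ‖a - b‖ / ‖a‖ := by
    rw [norm_smul, Real.norm_eq_abs, inv_sub_inv ha'.ne' hb'.ne', abs_div,
      abs_of_pos (mul_pos ha' hb'), div_mul_eq_mul_div, mul_div_mul_right _ _ hb'.ne']
    gcongr
    rw [norm_sub_rev a b]
    exact abs_norm_sub_norm_le b a
  calc ‖‖a‖⁻¹ • a - ‖b‖⁻¹ • b‖
      ≤ ‖‖a‖⁻¹ • (a - b)‖ + ‖(‖a‖⁻¹ - ‖b‖⁻¹) • b‖ := hsplit ▸ norm_add_le _ _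
    _ ≤ ‖a - b‖ / ‖a‖ + ‖a - b‖ / ‖a‖ := by
        rw [norm_smul, norm_inv, norm_norm, inv_mul_eq_div]
        gcongr
    _ = 2 * ‖a - b‖ / ‖a‖ := by ring

theorem HolderOnWith.of_dist_le_mul {X Y : Type*} [PseudoMetricSpace X] [PseudoMetricSpace Y]
    {C : ℝ} {r : ℝ≥0} {f : X → Y} {s : Set X}
    (h : ∀ x ∈ s, ∀ y ∈ s, dist (f x) (f y) ≤ C * dist x y ^ (r : ℝ)) :
    HolderOnWith C.toNNReal r f s := by
  intro x hx y hy
  rw [edist_dist, edist_dist, ENNReal.ofReal_rpow_of_nonneg dist_nonneg r.coe_nonneg,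
    ← ENNReal.ofReal_coe_nnreal, ← ENNReal.ofReal_mul (by positivity)]
  refine ENNReal.ofReal_le_ofReal ((h x hx y hy).trans ?_)
  gcongr
  exact Real.le_coe_toNNReal C

theorem IsCompact.exists_holderOnWith_of_locally {X Y : Type*} [PseudoMetricSpace X]
    [PseudoMetricSpace Y] {s : Set X} (hs : IsCompact s) {f : X → Y} {r : ℝ≥0}
    (hf : Bornology.IsBounded (f '' s))
    (hloc : ∀ x ∈ s, ∃ C, ∃ t ∈ 𝓝[s] x, HolderOnWith C r f t) :
    ∃ C, HolderOnWith C r f s := by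
  choose! C t ht hC using hloc
  choose! ρ hρ hρt using fun x hx => Metric.mem_nhdsWithin_iff.1 (ht x hx)
  obtain ⟨u, hus, hsu⟩ := hs.elim_nhds_subcover (fun x => ball x (ρ x))
    fun x hx => ball_mem_nhds x (hρ x hx)
  obtain ⟨δ, hδ, hδu⟩ := lebesgue_number_lemma_of_metric hs
    (c := fun i : u => ball (i : X) (ρ i)) (fun _ => isOpen_ball)
    (by simpa only [iUnion_subtype] using hsu)
  refine ⟨_, HolderOnWith.of_dist_le_mul
    (C := max (u.sup C : ℝ≥0) (diam (f '' s) / δ ^ (r : ℝ))) fun x hx y hy => ?_⟩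
  rcases lt_or_ge (dist x y) δ with hnear | hfar
  · -- `δ` is a Lebesgue number, so `x` and `y` lie in one ball on which `f` is Hölder
    obtain ⟨⟨i, hi⟩, hxi⟩ := hδu x hx
    have hyi : y ∈ ball i (ρ i) ∩ s := ⟨hxi (by rwa [mem_ball, dist_comm]), hy⟩
    have hxi' : x ∈ ball i (ρ i) ∩ s := ⟨hxi (mem_ball_self hδ), hx⟩
    calc dist (f x) (f y) ≤ C i * dist x y ^ (r : ℝ) :=
          (hC i (hus i hi)).dist_le (hρt i (hus i hi) hxi') (hρt i (hus i hi) hyi)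
      _ ≤ _ := by
          gcongr
          exact le_max_of_le_left (NNReal.coe_le_coe.2 (Finset.le_sup hi))
  · calc dist (f x) (f y) ≤ diam (f '' s) :=
          dist_le_diam_of_mem hf (mem_image_of_mem f hx) (mem_image_of_mem f hy)
      _ = diam (f '' s) / δ ^ (r : ℝ) * δ ^ (r : ℝ) := by
          rw [div_mul_cancel₀ _ (by positivity)]
      _ ≤ _ := by gcongr; exact le_max_right _ _

namespace IsC1AlphaDomainWithNormal

variable {n : ℕ} {α : ℝ} {Ω : Set (Euc n)} {ν : Euc n → Euc n}

theorem norm_normal (hΩ : IsC1AlphaDomainWithNormal α Ω ν) {x : Euc n} (hx : x ∈ frontier Ω) :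
    ‖ν x‖ = 1 := by
  obtain ⟨r, hr, f, -, -, hg, -, hν⟩ := hΩ.2.2.2 x hx
  rw [hν x ⟨hx, mem_ball_self hr⟩]
  exact NormedSpace.norm_normalize_eq_one_iff.2 (hg x (mem_ball_self hr))

theorem isCompact_frontier (hΩ : IsC1AlphaDomainWithNormal α Ω ν) : IsCompact (frontier Ω) :=
  isCompact_of_isClosed_isBounded isClosed_frontier
    (hΩ.2.1.closure.subset frontier_subset_closure)

theorem exists_holderOnWith_normal_nhds (hΩ : IsC1AlphaDomainWithNormal α Ω ν) (hα : 0 < α)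
    {x : Euc n} (hx : x ∈ frontier Ω) :
    ∃ C, ∃ t ∈ 𝓝[frontier Ω] x, HolderOnWith C α.toNNReal ν t := by
  obtain ⟨r, hr, f, -, ⟨c, hc⟩, hg, -, hν⟩ := hΩ.2.2.2 x hx
  have hgrad : HolderOnWith c.toNNReal α.toNNReal (gradient f) (ball x r) :=
    HolderOnWith.of_dist_le_mul fun y hy z hz => by
      rw [gradient, gradient, LinearIsometryEquiv.dist_map, dist_eq_norm, dist_eq_norm,
        Real.coe_toNNReal _ hα.le]
      exact hc y hy z hz
  set m := ‖gradient f x‖ / 2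
  have hm : 0 < m := half_pos (norm_pos_iff.2 (hg x (mem_ball_self hr)))
  have hnear : {y | m < ‖gradient f y‖} ∈ 𝓝 x :=
    ((hgrad.continuousOn (by simpa using hα)).continuousAt (ball_mem_nhds x hr)).norm.eventually
      (lt_mem_nhds (half_lt_self (norm_pos_iff.2 (hg x (mem_ball_self hr)))))
  obtain ⟨ρ, hρ, hρm⟩ := Metric.mem_nhds_iff.1 (Filter.inter_mem hnear (ball_mem_nhds x hr))
  refine ⟨_, frontier Ω ∩ ball x ρ, inter_mem_nhdsWithin _ (ball_mem_nhds x hρ),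
    HolderOnWith.of_dist_le_mul (C := 2 * c.toNNReal / m) ?_⟩
  rintro y ⟨hyΩ, hy⟩ z ⟨hzΩ, hz⟩
  obtain ⟨hym, hyr⟩ := hρm hy
  obtain ⟨-, hzr⟩ := hρm hz
  rw [dist_eq_norm, hν y ⟨hyΩ, hyr⟩, hν z ⟨hzΩ, hzr⟩]
  calc _ ≤ 2 * ‖gradient f y - gradient f z‖ / ‖gradient f y‖ :=
        NormedSpace.norm_normalize_sub_normalize_le (hg y hyr) (hg z hzr)
    _ ≤ 2 * (c.toNNReal * dist y z ^ (α.toNNReal : ℝ)) / m := by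
        rw [← dist_eq_norm]
        gcongr
        · exact hgrad.dist_le hyr hzr
        · exact le_of_lt hym
    _ = _ := by ring

theorem exists_holderOnWith_normal (hΩ : IsC1AlphaDomainWithNormal α Ω ν) (hα : 0 < α) :
    ∃ C, HolderOnWith C α.toNNReal ν (frontier Ω) :=
  hΩ.isCompact_frontier.exists_holderOnWith_of_locally
    ((isBounded_sphere (x := 0) (r := 1)).subset <| by
      rintro _ ⟨x, hx, rfl⟩
      simpa using hΩ.norm_normal hx)
    fun _ hx => hΩ.exists_holderOnWith_normal_nhds hα hx

end IsC1AlphaDomainWithNormal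

namespace ContinuousLinearEquiv

variable {E F : Type*} [NormedAddCommGroup E] [NormedSpace ℝ E] [NormedAddCommGroup F]
  [NormedSpace ℝ F] (L : E ≃L[ℝ] F)

theorem norm_le_norm_symm_mul_norm_apply (z : E) : ‖z‖ ≤ ‖(L.symm : F →L[ℝ] E)‖ * ‖L z‖ := by
  simpa using (L.symm : F →L[ℝ] E).le_opNorm (L z)

theorem inv_norm_apply_pow_le (k : ℕ) {z : E} (hz : z ≠ 0) :
    (‖L z‖ ^ k)⁻¹ ≤ ‖(L.symm : F →L[ℝ] E)‖ ^ k / ‖z‖ ^ k := by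
  have hLz : 0 < ‖L z‖ := norm_pos_iff.2 (L.map_ne_zero_iff.2 hz)
  rw [le_div_iff₀ (by positivity), inv_mul_eq_div, div_le_iff₀ (by positivity), ← mul_pow]
  exact pow_le_pow_left₀ (norm_nonneg z) (L.norm_le_norm_symm_mul_norm_apply z) k

theorem exists_abs_inv_norm_apply_pow_sub_le (k : ℕ) :
    ∃ c, 0 ≤ c ∧ ∀ z w : E, z ≠ 0 → 2 * ‖z - w‖ ≤ ‖z‖ →
      |(‖L z‖ ^ k)⁻¹ - (‖L w‖ ^ k)⁻¹| ≤ c * ‖z - w‖ / ‖z‖ ^ (k + 1) := by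
  set A := ‖(L : E →L[ℝ] F)‖
  set B := ‖(L.symm : F →L[ℝ] E)‖
  refine ⟨k * (2 * A) ^ (k - 1) * A * (B * (2 * B)) ^ k, by positivity, fun z w hz hzw => ?_⟩
  have hρ : 0 < ‖z‖ := norm_pos_iff.2 hz
  have hwz : ‖z‖ ≤ 2 * ‖w‖ := by linarith [norm_le_norm_add_norm_sub' z w]
  have hw : ‖w‖ ≤ 2 * ‖z‖ := by linarith [norm_le_norm_add_norm_sub' w z, norm_sub_rev w z]
  have hw0 : w ≠ 0 := norm_pos_iff.1 (by linarith)
  have ha : 0 < ‖L z‖ := norm_pos_iff.2 (L.map_ne_zero_iff.2 hz)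
  have hb : 0 < ‖L w‖ := norm_pos_iff.2 (L.map_ne_zero_iff.2 hw0)
  have hmax : max |‖L w‖| |‖L z‖| ≤ 2 * A * ‖z‖ := by
    rw [abs_of_pos ha, abs_of_pos hb, max_le_iff]
    constructor
    · calc ‖L w‖ ≤ A * ‖w‖ := (L : E →L[ℝ] F).le_opNorm w
        _ ≤ A * (2 * ‖z‖) := by gcongr
        _ = 2 * A * ‖z‖ := by ring
    · calc ‖L z‖ ≤ A * ‖z‖ := (L : E →L[ℝ] F).le_opNorm z
        _ ≤ 2 * A * ‖z‖ := by nlinarith [norm_nonneg (L : E →L[ℝ] F)]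
  have hab : |‖L w‖ - ‖L z‖| ≤ A * ‖z - w‖ := by
    rw [abs_sub_comm]
    calc |‖L z‖ - ‖L w‖| ≤ ‖L z - L w‖ := abs_norm_sub_norm_le _ _
      _ = ‖L (z - w)‖ := by rw [map_sub]
      _ ≤ A * ‖z - w‖ := (L : E →L[ℝ] F).le_opNorm _
  have hden : ‖z‖ ^ (2 * k) ≤ (B * (2 * B)) ^ k * (‖L z‖ ^ k * ‖L w‖ ^ k) := by
    have hwB : ‖z‖ ≤ 2 * B * ‖L w‖ := by
      linarith [L.norm_le_norm_symm_mul_norm_apply w]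
    calc ‖z‖ ^ (2 * k) = ‖z‖ ^ k * ‖z‖ ^ k := by rw [two_mul, pow_add]
      _ ≤ (B * ‖L z‖) ^ k * (2 * B * ‖L w‖) ^ k := by
          gcongr
          exact L.norm_le_norm_symm_mul_norm_apply z
      _ = (B * (2 * B)) ^ k * (‖L z‖ ^ k * ‖L w‖ ^ k) := by ring
  calc |(‖L z‖ ^ k)⁻¹ - (‖L w‖ ^ k)⁻¹|
      = |‖L w‖ ^ k - ‖L z‖ ^ k| / (‖L z‖ ^ k * ‖L w‖ ^ k) := by
        rw [inv_sub_inv (by positivity) (by positivity), abs_div,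
          abs_of_pos (a := ‖L z‖ ^ k * ‖L w‖ ^ k) (by positivity)]
    _ ≤ |‖L w‖ - ‖L z‖| * k * max |‖L w‖| |‖L z‖| ^ (k - 1) / (‖L z‖ ^ k * ‖L w‖ ^ k) := by
        gcongr
        exact abs_pow_sub_pow_le _ _ _
    _ ≤ A * ‖z - w‖ * k * (2 * A * ‖z‖) ^ (k - 1) * (B * (2 * B)) ^ k / ‖z‖ ^ (2 * k) := by
        rw [div_le_div_iff₀ (by positivity) (by positivity), mul_assoc _ ((B * (2 * B)) ^ k)]
        gcongr
    _ = _ := by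
        rcases k with _ | j
        · simp
        · rw [Nat.add_sub_cancel]
          field_simp
          ring

end ContinuousLinearEquiv

theorem Real.rpow_mul_le_rpow_mul {r d e : ℝ} (hr : r ≤ 1) (he : 0 < e) (hed : e ≤ d) :
    d ^ r * e ≤ e ^ r * d := by
  have hd : 0 < d := he.trans_le hed
  have h := Real.rpow_le_rpow_of_exponent_ge (div_pos he hd) ((div_le_one hd).2 hed) hr
  rwa [Real.rpow_one, Real.div_rpow he.le hd.le, div_le_div_iff₀ hd (by positivity),
    mul_comm e] at h

namespace HolderOnWith

variable {E F : Type*} [NormedAddCommGroup E] [NormedSpace ℝ E] [NormedAddCommGroup F]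
  [NormedSpace ℝ F] {X : Set E} {g : E → ℝ} {C r : ℝ≥0}

theorem rpow_mul_abs_div_norm_pow_le (hg : HolderOnWith C r g X) (L : E ≃L[ℝ] F) (k : ℕ)
    {x y : E} (hx : x ∈ X) (hy : y ∈ X) (hxy : x ≠ y) :
    ‖x - y‖ ^ ((k : ℝ) - r) * |(g x - g y) / ‖L (x - y)‖ ^ k|
      ≤ C * ‖(L.symm : F →L[ℝ] E)‖ ^ k := by
  have hd : 0 < ‖x - y‖ := norm_sub_pos_iff.2 hxy
  have hgxy : |g x - g y| ≤ C * ‖x - y‖ ^ (r : ℝ) := by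
    have h := hg.dist_le hx hy
    rwa [Real.dist_eq, dist_eq_norm] at h
  calc ‖x - y‖ ^ ((k : ℝ) - r) * |(g x - g y) / ‖L (x - y)‖ ^ k|
      = ‖x - y‖ ^ ((k : ℝ) - r) * |g x - g y| * (‖L (x - y)‖ ^ k)⁻¹ := by
        rw [abs_div, abs_of_nonneg (a := ‖L (x - y)‖ ^ k) (by positivity), div_eq_mul_inv,
          mul_assoc]
    _ ≤ ‖x - y‖ ^ ((k : ℝ) - r) * (C * ‖x - y‖ ^ (r : ℝ))
          * (‖(L.symm : F →L[ℝ] E)‖ ^ k / ‖x - y‖ ^ k) := by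
        gcongr
        exact L.inv_norm_apply_pow_le k (sub_ne_zero.2 hxy)
    _ = C * ‖(L.symm : F →L[ℝ] E)‖ ^ k
          * (‖x - y‖ ^ ((k : ℝ) - r) * ‖x - y‖ ^ (r : ℝ) / ‖x - y‖ ^ k) := by ring
    _ = C * ‖(L.symm : F →L[ℝ] E)‖ ^ k := by
        rw [← Real.rpow_add hd, sub_add_cancel, Real.rpow_natCast, div_self (by positivity),
          mul_one]

theorem exists_bound_div_norm_pow_sub (hg : HolderOnWith C r g X) (hr : r ≤ 1) (L : E ≃L[ℝ] F)
    (k : ℕ) :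
    ∃ A, ∀ x' ∈ X, ∀ x'' ∈ X, ∀ y ∈ X, x' ≠ x'' → 2 * ‖x' - x''‖ ≤ ‖x' - y‖ →
      ‖x' - y‖ ^ k / ‖x' - x''‖ ^ (r : ℝ) *
        |(g x' - g y) / ‖L (x' - y)‖ ^ k - (g x'' - g y) / ‖L (x'' - y)‖ ^ k| ≤ A := by
  obtain ⟨c, hc0, hc⟩ := L.exists_abs_inv_norm_apply_pow_sub_le k
  set B := ‖(L.symm : F →L[ℝ] E)‖
  refine ⟨C * B ^ k + C * 2 ^ (r : ℝ) * c, fun x' hx' x'' hx'' y hy hne hsep => ?_⟩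
  set d := ‖x' - y‖
  set e := ‖x' - x''‖
  have he : 0 < e := norm_sub_pos_iff.2 hne
  have hd : 0 < d := by linarith
  have hx'y : x' - y ≠ 0 := norm_pos_iff.1 hd
  have hzw : (x' - y) - (x'' - y) = x' - x'' := sub_sub_sub_cancel_right x' x'' y
  have hg' : |g x' - g x''| ≤ C * e ^ (r : ℝ) := by
    have h := hg.dist_le hx' hx''
    rwa [Real.dist_eq, dist_eq_norm] at h
  have hg'' : |g x'' - g y| ≤ C * (2 * d) ^ (r : ℝ) := by
    refine (Real.dist_eq _ _).symm.trans_le (hg.dist_le_of_le hx'' hy ?_)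
    rw [dist_eq_norm]
    linarith [norm_sub_le_norm_sub_add_norm_sub x'' x' y, norm_sub_rev x'' x']
  have hdiff := hc (x' - y) (x'' - y) hx'y (by rwa [hzw])
  rw [hzw] at hdiff
  have hsplit : (g x' - g y) / ‖L (x' - y)‖ ^ k - (g x'' - g y) / ‖L (x'' - y)‖ ^ k
      = (g x' - g x'') * (‖L (x' - y)‖ ^ k)⁻¹
        + (g x'' - g y) * ((‖L (x' - y)‖ ^ k)⁻¹ - (‖L (x'' - y)‖ ^ k)⁻¹) := by ring
  have hratio : d ^ (r : ℝ) * e / (e ^ (r : ℝ) * d) ≤ 1 :=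
    (div_le_one (by positivity)).2 (Real.rpow_mul_le_rpow_mul hr he (by linarith))
  calc d ^ k / e ^ (r : ℝ) * |(g x' - g y) / ‖L (x' - y)‖ ^ k - (g x'' - g y) / ‖L (x'' - y)‖ ^ k|
      ≤ d ^ k / e ^ (r : ℝ) * (|g x' - g x''| * (‖L (x' - y)‖ ^ k)⁻¹
        + |g x'' - g y| * |(‖L (x' - y)‖ ^ k)⁻¹ - (‖L (x'' - y)‖ ^ k)⁻¹|) := by
        rw [hsplit]
        gcongr
        refine (abs_add_le _ _).trans_eq ?_
        rw [abs_mul, abs_mul, abs_inv, abs_of_nonneg (by positivity : (0 : ℝ) ≤ ‖L (x' - y)‖ ^ k)]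
    _ ≤ d ^ k / e ^ (r : ℝ) * (C * e ^ (r : ℝ) * (B ^ k / d ^ k)
        + C * (2 * d) ^ (r : ℝ) * (c * e / d ^ (k + 1))) := by
        gcongr
        exact L.inv_norm_apply_pow_le k hx'y
    _ = C * B ^ k + C * 2 ^ (r : ℝ) * c * (d ^ (r : ℝ) * e / (e ^ (r : ℝ) * d)) := by
        rw [Real.mul_rpow zero_le_two hd.le]
        field_simp
        ring
    _ ≤ C * B ^ k + C * 2 ^ (r : ℝ) * c := by
        linarith [mul_le_of_le_one_right (by positivity : 0 ≤ C * 2 ^ (r : ℝ) * c) hratio]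

end HolderOnWith

theorem memK_div_norm_pow_of_holderOnWith {n : ℕ} {X : Set (Euc n)} {g : Euc n → ℝ}
    {C r : ℝ≥0} (hg : HolderOnWith C r g X) (hr0 : 0 < r) (hr1 : r ≤ 1)
    (L : Euc n ≃L[ℝ] Euc n) (k : ℕ) :
    memK X X ((k : ℝ) - r) k r
      (fun x y => ((g x - g y : ℝ) : ℂ) / ((‖L (x - y)‖ ^ k : ℝ) : ℂ)) := by
  have hK : ∀ x y, ((g x - g y : ℝ) : ℂ) / ((‖L (x - y)‖ ^ k : ℝ) : ℂ)
      = (((g x - g y) / ‖L (x - y)‖ ^ k : ℝ) : ℂ) := fun x y => (Complex.ofReal_div _ _).symm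
  refine ⟨?_, ?_, ?_⟩
  · have hgc := hg.continuousOn hr0
    refine ContinuousOn.div ?_ (by fun_prop) fun p hp => ?_
    · refine Complex.continuous_ofReal.comp_continuousOn (ContinuousOn.sub ?_ ?_)
      · exact hgc.comp continuousOn_fst fun p hp => hp.1.1
      · exact hgc.comp continuousOn_snd fun p hp => hp.1.2
    · have hp' : L (p.1 - p.2) ≠ 0 := L.map_ne_zero_iff.2 (sub_ne_zero.2 hp.2)
      exact_mod_cast pow_ne_zero k (norm_ne_zero_iff.2 hp')
  · refine ⟨C * ‖(L.symm : Euc n →L[ℝ] Euc n)‖ ^ k, ?_⟩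
    rintro _ ⟨x, hx, y, hy, hxy, rfl⟩
    dsimp only
    rw [hK, Complex.norm_real, Real.norm_eq_abs]
    exact hg.rpow_mul_abs_div_norm_pow_le L k hx hy hxy
  · obtain ⟨A, hA⟩ := hg.exists_bound_div_norm_pow_sub hr1 L k
    refine ⟨A, ?_⟩
    rintro _ ⟨x', hx', x'', hx'', hne, y, hy, hsep, rfl⟩
    dsimp only
    rw [hK, hK, ← Complex.ofReal_sub, Complex.norm_real, Real.norm_eq_abs, Real.rpow_natCast]
    exact hA x' hx' x'' hx'' y hy hne hsep

/-- If `α ∈ (0,1]`, `Ω ⊆ ℝⁿ` is a bounded open set of class `C^{1,α}` with outward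
unit normal `ν` and `T` is an invertible real `n×n` matrix, then for each component
`h` the kernel `(ν_h(x) - ν_h(y))/|T⁻¹(x-y)|ⁿ` belongs to
`𝒦_{n-α,n,α}(∂Ω×∂Ω)`. -/
theorem stmt_18 {n : ℕ} (α : ℝ) (hα : α ∈ Ioc (0 : ℝ) 1)
    (Ω : Set (Euc n)) (ν : Euc n → Euc n)
    (hΩ : IsC1AlphaDomainWithNormal α Ω ν)
    (T : Euc n ≃ₗ[ℝ] Euc n) (h : Fin n) :
    memK (frontier Ω) (frontier Ω) ((n : ℝ) - α) (n : ℝ) α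
      (fun x y => ((ν x h - ν y h : ℝ) : ℂ) / ((‖T.symm (x - y)‖ ^ n : ℝ) : ℂ)) := by
  obtain ⟨C, hν⟩ := hΩ.exists_holderOnWith_normal hα.1
  have hνh : HolderOnWith C α.toNNReal (fun x => ν x h) (frontier Ω) :=
    fun x hx y hy => (PiLp.edist_apply_le _ _ h).trans (hν x hx y hy)
  have hK := memK_div_norm_pow_of_holderOnWith hνh (Real.toNNReal_pos.2 hα.1)
    (Real.toNNReal_le_one.2 hα.2) T.symm.toContinuousLinearEquiv n
  rwa [Real.coe_toNNReal _ hα.1.le] at hK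
end
end
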